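/- arXiv:1212.0876 — 8 statements merged into one kernel-verified Lean document; each statement's English description precedes it below -/
import Mathlib

section
/- Let N ≥ 1, let S be an N×N real symmetric positive definite matrix, set V(x) = (1/2)·xᵀSx for x ∈ ℝ^N, and let b(x) = −Ax for an N×N real matrix A. Then the vector field x ↦ b(x)·e^{−V(x)} has identically vanishing divergence on ℝ^N (i.e. ∑_{i=1}^N ∂_{x_i}((−Ax)_i · e^{−V(x)}) = 0 for every x ∈ ℝ^N) if and only if A = J·S for some N×N real antisymmetric matrix J (Jᵀ = −J). -/
/-!
Since `V` is quadratic, `∇e^{-V}(x) = -e^{-V(x)} S x`, so the product rule gives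
`div((-Ax) e^{-V}) = e^{-V} ((Ax)·(Sx) - tr A) = e^{-V} (xᵀ(AᵀS)x - tr A)`.
This vanishes identically iff `tr A = 0` (evaluate at `x = 0`) and the quadratic form of `AᵀS`
vanishes, i.e. `AᵀS` is antisymmetric. As `S` is invertible and symmetric, that means
`J := A S⁻¹` is antisymmetric, since `Jᵀ = S⁻¹ (AᵀS) S⁻¹`; conversely `tr (J S) = 0` whenever
`J` is antisymmetric and `S` symmetric.
-/

open Matrix

namespace Matrix

variable {n R : Type*} [Fintype n] [CommRing R]

theorem dotProduct_mulVec_comm (M : Matrix n n R) (u v : n → R) :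
    u ⬝ᵥ M *ᵥ v = v ⬝ᵥ Mᵀ *ᵥ u := by
  rw [dotProduct_mulVec, mulVec_transpose, dotProduct_comm]

theorem forall_dotProduct_mulVec_self_eq_zero_iff [IsAddTorsionFree R] {M : Matrix n n R} :
    (∀ x : n → R, x ⬝ᵥ M *ᵥ x = 0) ↔ Mᵀ = -M := by
  classical
  constructor
  · intro h
    ext i j
    have hpolar := h (Pi.single j 1 + Pi.single i 1)
    have hii := h (Pi.single i 1)
    have hjj := h (Pi.single j 1)
    simp only [mulVec_add, dotProduct_add, add_dotProduct, mulVec_single_one,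
      single_one_dotProduct, col_apply] at hpolar hii hjj
    rw [transpose_apply, neg_apply]
    linear_combination hpolar - hii - hjj
  · intro hM x
    refine self_eq_neg.mp ?_
    conv_lhs => rw [dotProduct_mulVec_comm, hM, neg_mulVec, dotProduct_neg]

theorem trace_mul_eq_zero_of_transpose_eq_neg [IsAddTorsionFree R] {J S : Matrix n n R}
    (hJ : Jᵀ = -J) (hS : Sᵀ = S) : (J * S).trace = 0 := by
  refine self_eq_neg.mp ?_
  conv_lhs => rw [← trace_transpose, transpose_mul, hS, hJ, mul_neg, trace_neg, trace_mul_comm]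

theorem exists_transpose_eq_neg_and_eq_mul_iff [DecidableEq n] {A S : Matrix n n R}
    (hS : Sᵀ = S) (hSdet : IsUnit S.det) :
    (∃ J : Matrix n n R, Jᵀ = -J ∧ A = J * S) ↔ (Aᵀ * S)ᵀ = -(Aᵀ * S) := by
  rw [transpose_mul, transpose_transpose, hS]
  constructor
  · rintro ⟨J, hJ, rfl⟩
    rw [transpose_mul, hS, hJ]
    simp only [mul_neg, neg_mul, neg_neg, mul_assoc]
  · intro hSA
    refine ⟨A * S⁻¹, ?_, by rw [nonsing_inv_mul_cancel_right _ _ hSdet]⟩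
    calc (A * S⁻¹)ᵀ = S⁻¹ * (Aᵀ * S) * S⁻¹ := by
          rw [transpose_mul, transpose_nonsing_inv, hS, mul_assoc,
            mul_nonsing_inv_cancel_right _ _ hSdet]
      _ = -(A * S⁻¹) := by
          rw [neg_eq_iff_eq_neg.mp hSA.symm, mul_neg, neg_mul, ← mul_assoc,
            nonsing_inv_mul _ hSdet, one_mul]

end Matrix

section Calculus

variable {n E : Type*} [Fintype n] [NormedAddCommGroup E] [NormedSpace ℝ E]

theorem DifferentiableAt.dotProduct {f g : E → n → ℝ} {x : E} (hf : DifferentiableAt ℝ f x)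
    (hg : DifferentiableAt ℝ g x) : DifferentiableAt ℝ (fun y => f y ⬝ᵥ g y) x :=
  DifferentiableAt.fun_sum fun i _ => (differentiableAt_pi.1 hf i).mul (differentiableAt_pi.1 hg i)

theorem fderiv_dotProduct_apply {f g : E → n → ℝ} {x : E} (hf : DifferentiableAt ℝ f x)
    (hg : DifferentiableAt ℝ g x) (v : E) :
    fderiv ℝ (fun y => f y ⬝ᵥ g y) x v = fderiv ℝ f x v ⬝ᵥ g x + f x ⬝ᵥ fderiv ℝ g x v := by
  have hfi := differentiableAt_pi.1 hf
  have hgi := differentiableAt_pi.1 hg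
  simp only [dotProduct]
  rw [fderiv_fun_sum (A := fun i y => f y i * g y i) fun i _ => (hfi i).mul (hgi i),
    ← Finset.sum_add_distrib, _root_.sum_apply]
  refine Finset.sum_congr rfl fun i _ => ?_
  rw [fderiv_fun_mul (hfi i) (hgi i), fderiv_apply hf, fderiv_apply hg]
  simp only [_root_.add_apply, _root_.smul_apply, smul_eq_mul, ContinuousLinearMap.comp_apply,
    ContinuousLinearMap.proj_apply]
  ring

variable [DecidableEq n]

theorem hasFDerivAt_mulVec {m : Type*} [Fintype m] (A : Matrix m n ℝ) (x : n → ℝ) :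
    HasFDerivAt (fun y => A *ᵥ y) (LinearMap.toContinuousLinearMap (toLin' A)) x :=
  (LinearMap.toContinuousLinearMap (toLin' A)).hasFDerivAt

theorem differentiableAt_dotProduct_mulVec_self (S : Matrix n n ℝ) (x : n → ℝ) :
    DifferentiableAt ℝ (fun y => y ⬝ᵥ S *ᵥ y) x :=
  differentiableAt_fun_id.dotProduct (hasFDerivAt_mulVec S x).differentiableAt

theorem fderiv_dotProduct_mulVec_self_apply (S : Matrix n n ℝ) (x v : n → ℝ) :
    fderiv ℝ (fun y => y ⬝ᵥ S *ᵥ y) x v = v ⬝ᵥ S *ᵥ x + x ⬝ᵥ S *ᵥ v := by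
  rw [fderiv_dotProduct_apply (f := fun y => y) differentiableAt_fun_id
    (hasFDerivAt_mulVec S x).differentiableAt, fderiv_fun_id, (hasFDerivAt_mulVec S x).fderiv]
  simp

theorem differentiableAt_exp_neg_half_dotProduct_mulVec_self (S : Matrix n n ℝ) (x : n → ℝ) :
    DifferentiableAt ℝ (fun y => Real.exp (-(1 / 2 * (y ⬝ᵥ S *ᵥ y)))) x := by
  have := differentiableAt_dotProduct_mulVec_self S x
  fun_prop

theorem fderiv_exp_neg_half_dotProduct_mulVec_self_apply {S : Matrix n n ℝ} (hS : Sᵀ = S)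
    (x v : n → ℝ) :
    fderiv ℝ (fun y => Real.exp (-(1 / 2 * (y ⬝ᵥ S *ᵥ y)))) x v
      = -(Real.exp (-(1 / 2 * (x ⬝ᵥ S *ᵥ x))) * (S *ᵥ x ⬝ᵥ v)) := by
  have hq := differentiableAt_dotProduct_mulVec_self S x
  rw [fderiv_exp (hq.const_mul _).fun_neg, fderiv_fun_neg, fderiv_const_mul hq]
  simp only [_root_.smul_apply, _root_.neg_apply, smul_eq_mul,
    fderiv_dotProduct_mulVec_self_apply]
  rw [dotProduct_mulVec_comm S x v, hS, dotProduct_comm v]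
  ring

noncomputable def divergence (F : (n → ℝ) → n → ℝ) (x : n → ℝ) : ℝ :=
  ∑ i, fderiv ℝ (fun y => F y i) x (Pi.single i 1)

theorem divergence_mul_apply {b : (n → ℝ) → n → ℝ} {w : (n → ℝ) → ℝ} {x : n → ℝ}
    (hb : DifferentiableAt ℝ b x) (hw : DifferentiableAt ℝ w x) :
    divergence (fun y i => b y i * w y) x
      = divergence b x * w x + ∑ i, b x i * fderiv ℝ w x (Pi.single i 1) := by
  simp only [divergence, Finset.sum_mul, ← Finset.sum_add_distrib]
  refine Finset.sum_congr rfl fun i _ => ?_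
  rw [fderiv_fun_mul (differentiableAt_pi.1 hb i) hw]
  simp only [_root_.add_apply, _root_.smul_apply, smul_eq_mul]
  ring

theorem divergence_mulVec (A : Matrix n n ℝ) (x : n → ℝ) :
    divergence (fun y => A *ᵥ y) x = A.trace := by
  simp only [divergence, fderiv_apply (hasFDerivAt_mulVec A x).differentiableAt,
    (hasFDerivAt_mulVec A x).fderiv]
  simp [trace]

theorem divergence_neg_mulVec_mul_exp_neg_half_dotProduct_mulVec_self {S : Matrix n n ℝ}
    (hS : Sᵀ = S) (A : Matrix n n ℝ) (x : n → ℝ) :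
    divergence (fun y i => (-(A *ᵥ y)) i * Real.exp (-(1 / 2 * (y ⬝ᵥ S *ᵥ y)))) x
      = Real.exp (-(1 / 2 * (x ⬝ᵥ S *ᵥ x))) * (x ⬝ᵥ (Aᵀ * S) *ᵥ x - A.trace) := by
  have hb : DifferentiableAt ℝ (fun y => -(A *ᵥ y)) x := by
    simpa only [neg_mulVec] using (hasFDerivAt_mulVec (-A) x).differentiableAt
  rw [divergence_mul_apply hb (differentiableAt_exp_neg_half_dotProduct_mulVec_self S x)]
  have hdiv : divergence (fun y => -(A *ᵥ y)) x = -A.trace := by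
    simpa only [neg_mulVec, trace_neg] using divergence_mulVec (-A) x
  have hgrad : ∑ i, (-(A *ᵥ x)) i * fderiv ℝ (fun y => Real.exp (-(1 / 2 * (y ⬝ᵥ S *ᵥ y)))) x
      (Pi.single i 1) = Real.exp (-(1 / 2 * (x ⬝ᵥ S *ᵥ x))) * ∑ i, (A *ᵥ x) i * (S *ᵥ x) i := by
    simp only [fderiv_exp_neg_half_dotProduct_mulVec_self_apply hS, dotProduct_single_one,
      Finset.mul_sum, Pi.neg_apply]
    exact Finset.sum_congr rfl fun i _ => by ring
  have hquad : x ⬝ᵥ (Aᵀ * S) *ᵥ x = ∑ i, (A *ᵥ x) i * (S *ᵥ x) i := by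
    rw [← mulVec_mulVec, dotProduct_mulVec_comm, transpose_transpose, dotProduct_comm, dotProduct]
  rw [hdiv, hgrad, hquad]
  ring

end Calculus

theorem divergence_free_iff_antisymm_general
    (N : ℕ) (S : Matrix (Fin N) (Fin N) ℝ) (hS : S.PosDef)
    (A : Matrix (Fin N) (Fin N) ℝ) :
    (∀ x : Fin N → ℝ,
        ∑ i : Fin N,
          fderiv ℝ
            (fun y : Fin N → ℝ =>
              (-(A *ᵥ y)) i * Real.exp (-(1 / 2 * (y ⬝ᵥ (S *ᵥ y))))) x (Pi.single i 1) = 0)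
      ↔ ∃ J : Matrix (Fin N) (Fin N) ℝ, Jᵀ = -J ∧ A = J * S := by
  have hSt : Sᵀ = S := hS.isHermitian.eq
  have hSdet : IsUnit S.det := (isUnit_iff_isUnit_det S).mp hS.isUnit
  change (∀ x, divergence _ x = 0) ↔ _
  simp only [divergence_neg_mulVec_mul_exp_neg_half_dotProduct_mulVec_self hSt, mul_eq_zero,
    (Real.exp_pos _).ne', false_or, sub_eq_zero]
  constructor
  · intro h
    have htrace : A.trace = 0 := by simpa using (h 0).symm
    refine (exists_transpose_eq_neg_and_eq_mul_iff hSt hSdet).mpr ?_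
    exact forall_dotProduct_mulVec_self_eq_zero_iff.mp fun x => (h x).trans htrace
  · intro hA x
    have hskew := (exists_transpose_eq_neg_and_eq_mul_iff hSt hSdet).mp hA
    obtain ⟨J, hJ, rfl⟩ := hA
    rw [forall_dotProduct_mulVec_self_eq_zero_iff.mpr hskew x,
      trace_mul_eq_zero_of_transpose_eq_neg hJ hSt]

/-- For a quadratic potential `V(x) = ½ xᵀSx` with `S` symmetric positive
definite, the vector field `x ↦ (-Ax)·e^{-V(x)}` is divergence free on `ℝ^N` if and only
if `A = J S` for some antisymmetric matrix `J`. -/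
theorem divergence_free_iff_antisymm
    (N : ℕ) (hN : 1 ≤ N) (S : Matrix (Fin N) (Fin N) ℝ) (hS : S.PosDef)
    (A : Matrix (Fin N) (Fin N) ℝ) :
    (∀ x : Fin N → ℝ,
        ∑ i : Fin N,
          fderiv ℝ
            (fun y : Fin N → ℝ =>
              (-(A *ᵥ y)) i * Real.exp (-(1 / 2 * (y ⬝ᵥ (S *ᵥ y))))) x (Pi.single i 1) = 0)
      ↔ ∃ J : Matrix (Fin N) (Fin N) ℝ, Jᵀ = -J ∧ A = J * S :=
  divergence_free_iff_antisymm_general N S hS A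
end

section
/- Let S be an N×N real symmetric positive definite matrix. Then: (a) for every N×N real antisymmetric matrix J, the matrix B_J = (I+J)S has at least one eigenvalue λ ∈ ℂ with Re(λ) ≤ Tr(S)/N; and (b) there exists an N×N real antisymmetric matrix J such that every eigenvalue λ ∈ ℂ of (I+J)S satisfies Re(λ) = Tr(S)/N. Consequently, the maximum over antisymmetric J of min{Re(λ) : λ an eigenvalue of (I+J)S} equals Tr(S)/N and is attained. -/
/-!
Since `Tr (J S) = 0` for `J` antisymmetric and `S` symmetric, `(1 + J) S` has trace `Tr S`, so
its `N` complex eigenvalues (with multiplicity) average to `c = Tr S / N` and one of them has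
real part at most `c`.

Conversely, with `R = √S` the matrix `(1 + J) S = (1 + J) R · R` has the characteristic
polynomial of `R (1 + J) R = S + R J R`, and `R J R` runs over all antisymmetric matrices. Every
trace-zero matrix is orthogonally similar to one with zero diagonal (choose a unit vector `v`
with `vᵀ M v = 0` and recurse on `v^⊥`), so `S` is orthogonally similar to a symmetric `P` with
constant diagonal `c`. Adding to `P` the antisymmetric matrix that cancels its part below the
diagonal makes it upper triangular with diagonal `c`, so `c` is its only eigenvalue.
-/

open Matrix Polynomial

namespace Matrix

section upperSkew

variable {ι R : Type*} [LinearOrder ι] [Ring R]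

def upperSkew (P : Matrix ι ι R) : Matrix ι ι R :=
  of fun i j => if i < j then P i j else if j < i then -P j i else 0

theorem transpose_upperSkew (P : Matrix ι ι R) : (upperSkew P)ᵀ = -upperSkew P := by
  ext i j
  rcases lt_trichotomy i j with h | rfl | h
  · simp [upperSkew, h, h.not_gt]
  · simp [upperSkew]
  · simp [upperSkew, h, h.not_gt]

@[simp]
theorem upperSkew_apply_self (P : Matrix ι ι R) (i : ι) : upperSkew P i i = 0 := by
  simp [upperSkew]

theorem isUpperTriangular_add_upperSkew {P : Matrix ι ι R} (hP : P.IsSymm) :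
    (P + upperSkew P).IsUpperTriangular := fun i j (h : j < i) => by
  simp [upperSkew, h, h.not_gt, hP.apply i j]

end upperSkew

variable {ι : Type*} [Fintype ι]

theorem trace_one_add_mul_eq_trace [DecidableEq ι] {S J : Matrix ι ι ℝ} (hS : S.IsSymm)
    (hJ : Jᵀ = -J) : ((1 + J) * S).trace = S.trace := by
  have h : (J * S).trace = -(J * S).trace :=
    calc (J * S).trace = (J * S)ᵀ.trace := (trace_transpose _).symm
      _ = -(J * S).trace := by
        rw [transpose_mul, hS.eq, hJ, Matrix.mul_neg, trace_neg, trace_mul_comm]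
  rw [add_mul, one_mul, trace_add]
  linarith

theorem exists_mem_spectrum_re_le_trace_div [DecidableEq ι] [Nonempty ι] (B : Matrix ι ι ℝ) :
    ∃ μ ∈ spectrum ℂ (B.map Complex.ofReal), μ.re ≤ B.trace / Fintype.card ι := by
  set p := (B.map Complex.ofReal).charpoly
  have hcard : p.roots.card = Fintype.card ι := by
    rw [← (IsAlgClosed.splits p).natDegree_eq_card_roots, charpoly_natDegree_eq_dim]
  have hne : p.roots ≠ 0 := by
    rw [← Multiset.card_pos, hcard]
    exact Fintype.card_pos
  obtain ⟨μ, hμ, hmin⟩ := Multiset.exists_min_image Complex.re hne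
  refine ⟨μ, mem_spectrum_iff_isRoot_charpoly.mpr (isRoot_of_mem_roots hμ), ?_⟩
  have hsum : (p.roots.map Complex.re).sum = B.trace := by
    have htr : (B.map Complex.ofReal).trace = B.trace := by simp [trace]
    rw [← Complex.coe_reAddGroupHom, ← map_multiset_sum, Complex.coe_reAddGroupHom,
      ← trace_eq_sum_roots_charpoly, htr, Complex.ofReal_re]
  have hle : (Fintype.card ι : ℝ) * μ.re ≤ B.trace := by
    rw [← hsum, ← nsmul_eq_mul, ← hcard, ← Multiset.card_map Complex.re]
    refine Multiset.card_nsmul_le_sum fun x hx => ?_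
    obtain ⟨z, hz, rfl⟩ := Multiset.mem_map.mp hx
    exact hmin z hz
  rw [le_div_iff₀ (by exact_mod_cast Fintype.card_pos)]
  linarith

theorem exists_ne_zero_dotProduct_mulVec_eq_zero [Nonempty ι] {M : Matrix ι ι ℝ}
    (hM : M.trace = 0) : ∃ v ≠ 0, v ⬝ᵥ M *ᵥ v = 0 := by
  classical
  obtain ⟨i, -, hi⟩ := Finset.exists_le_of_sum_le (g := fun _ => (0 : ℝ)) Finset.univ_nonempty
    (by simpa [trace] using hM.le)
  obtain ⟨j, -, hj⟩ := Finset.exists_le_of_sum_le (f := fun _ => (0 : ℝ)) Finset.univ_nonempty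
    (by simpa [trace] using hM.ge)
  -- the hyperplane `∑ k, v k = 1` is connected, avoids `0` and contains every `Pi.single k 1`
  have hconv : Convex ℝ {v : ι → ℝ | ∑ k, v k = 1} :=
    convex_hyperplane ⟨fun x y => Finset.sum_add_distrib, fun c x => by simp [Finset.mul_sum]⟩ 1
  obtain ⟨v, hv, hv0⟩ := hconv.isPreconnected.intermediate_value
    (a := Pi.single i 1) (b := Pi.single j 1) (by simp) (by simp)
    (f := fun v => v ⬝ᵥ M *ᵥ v) (by fun_prop) (by simpa using ⟨hi, hj⟩)
  refine ⟨v, ?_, hv0⟩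
  rintro rfl
  simp at hv

theorem transpose_mul_mul_apply_self (Q M : Matrix ι ι ℝ) (i : ι) :
    (Qᵀ * M * Q) i i = (fun k => Q k i) ⬝ᵥ M *ᵥ (fun k => Q k i) := by
  simp only [mul_apply, transpose_apply, dotProduct, mulVec, Finset.mul_sum, Finset.sum_mul]
  rw [Finset.sum_comm]
  exact Finset.sum_congr rfl fun _ _ => Finset.sum_congr rfl fun _ _ => by ring

variable [DecidableEq ι]

theorem exists_mem_orthogonalGroup_col_eq {u : EuclideanSpace ℝ ι} (hu : ‖u‖ = 1) (i : ι) :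
    ∃ Q ∈ orthogonalGroup ι ℝ, ∀ k, Q k i = u k := by
  have hON : Orthonormal ℝ (({i} : Set ι).domRestrict fun _ => u) := by
    rw [orthonormal_iff_ite]
    rintro ⟨x, rfl⟩ ⟨y, rfl⟩
    simp [hu]
  obtain ⟨b, hb⟩ := hON.exists_orthonormalBasis_extension_of_card_eq (by simp)
  refine ⟨(EuclideanSpace.basisFun ι ℝ).toBasis.toMatrix b,
    (EuclideanSpace.basisFun ι ℝ).toMatrix_orthonormalBasis_mem_orthogonal b, fun k => ?_⟩
  simp [Module.Basis.toMatrix_apply, hb i rfl]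

theorem exists_mem_orthogonalGroup_conj_apply_eq_zero {M : Matrix ι ι ℝ} (hM : M.trace = 0)
    (i : ι) : ∃ Q ∈ orthogonalGroup ι ℝ, (Qᵀ * M * Q) i i = 0 := by
  have : Nonempty ι := ⟨i⟩
  obtain ⟨v, hv, hMv⟩ := exists_ne_zero_dotProduct_mulVec_eq_zero hM
  set u : EuclideanSpace ℝ ι := ‖WithLp.toLp 2 v‖⁻¹ • WithLp.toLp 2 v
  obtain ⟨Q, hQ, hQi⟩ := exists_mem_orthogonalGroup_col_eq (u := u)
    (norm_smul_inv_norm (by simpa using hv)) i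
  refine ⟨Q, hQ, ?_⟩
  rw [transpose_mul_mul_apply_self, funext hQi]
  simp [u, mulVec_smul, hMv]

theorem fromBlocks_one_zero_zero_mem_orthogonalGroup {R m n : Type*} [CommRing R]
    [Fintype m] [DecidableEq m] [Fintype n] [DecidableEq n] {Q : Matrix n n R}
    (hQ : Q ∈ orthogonalGroup n R) :
    fromBlocks (1 : Matrix m m R) 0 0 Q ∈ orthogonalGroup (m ⊕ n) R := by
  rw [mem_orthogonalGroup_iff] at hQ ⊢
  simp [fromBlocks_transpose, fromBlocks_multiply, hQ]

theorem submatrix_mem_orthogonalGroup {R κ : Type*} [CommRing R] [Fintype κ] [DecidableEq κ]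
    {Q : Matrix κ κ R} (hQ : Q ∈ orthogonalGroup κ R) (e : ι ≃ κ) :
    Q.submatrix e e ∈ orthogonalGroup ι R := by
  rw [mem_orthogonalGroup_iff] at hQ ⊢
  rw [transpose_submatrix, submatrix_mul_equiv, hQ, submatrix_one_equiv]

theorem exists_mem_orthogonalGroup_conj_diag_eq_zero_of_apply_eq_zero {P : Matrix ι ι ℝ}
    (hP : P.trace = 0) {i₀ : ι} (hi₀ : P i₀ i₀ = 0)
    (hcompl : ∀ M : Matrix {i // i ≠ i₀} {i // i ≠ i₀} ℝ, M.trace = 0 →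
      ∃ Q ∈ orthogonalGroup {i // i ≠ i₀} ℝ, ∀ i, (Qᵀ * M * Q) i i = 0) :
    ∃ Q ∈ orthogonalGroup ι ℝ, ∀ i, (Qᵀ * P * Q) i i = 0 := by
  set e := Equiv.sumCompl (· = i₀)
  set P' := P.submatrix e e
  have htr : P'.toBlocks₂₂.trace = 0 := by
    have h : P.trace = P i₀ i₀ + P'.toBlocks₂₂.trace := by
      rw [trace, ← e.sum_comp, Fintype.sum_sum_type]
      simp [P', e, toBlocks₂₂, trace, (default : {a // a = i₀}).prop]
    rwa [hP, hi₀, zero_add, eq_comm] at h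
  obtain ⟨Q, hQ, hQP⟩ := hcompl _ htr
  set F := fromBlocks (1 : Matrix {i // i = i₀} {i // i = i₀} ℝ) 0 0 Q
  refine ⟨F.submatrix e.symm e.symm,
    submatrix_mem_orthogonalGroup (fromBlocks_one_zero_zero_mem_orthogonalGroup hQ) _, fun i => ?_⟩
  have hP' : P = P'.submatrix e.symm e.symm := by simp [P']
  have hblocks : ∀ j, (Fᵀ * P' * F) j j = 0 := by
    rw [← fromBlocks_toBlocks P']
    simp only [F, fromBlocks_transpose, fromBlocks_multiply]
    rintro (⟨j, rfl⟩ | j)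
    · simpa [P', e, toBlocks₁₁] using hi₀
    · simpa using hQP j
  rw [hP', transpose_submatrix, submatrix_mul_equiv, submatrix_mul_equiv]
  exact hblocks _

theorem exists_mem_orthogonalGroup_conj_diag_eq_zero {M : Matrix ι ι ℝ} (hM : M.trace = 0) :
    ∃ Q ∈ orthogonalGroup ι ℝ, ∀ i, (Qᵀ * M * Q) i i = 0 := by
  induction h : Fintype.card ι generalizing ι with
  | zero => exact ⟨1, one_mem _, fun i => (Fintype.card_eq_zero_iff.mp h).elim i⟩
  | succ n ih =>
    obtain ⟨i₀⟩ : Nonempty ι := Fintype.card_pos_iff.mp (by omega)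
    obtain ⟨Q₁, hQ₁, hQ₁M⟩ := exists_mem_orthogonalGroup_conj_apply_eq_zero hM i₀
    have hQ₁tr : (Q₁ᵀ * M * Q₁).trace = 0 := by
      rwa [trace_mul_cycle, (mem_orthogonalGroup_iff _ _).1 hQ₁, Matrix.one_mul]
    obtain ⟨Q₂, hQ₂, hQ₂M⟩ := exists_mem_orthogonalGroup_conj_diag_eq_zero_of_apply_eq_zero
      hQ₁tr hQ₁M fun M' hM' => ih hM' (by simp [Fintype.card_subtype_compl, h])
    refine ⟨Q₁ * Q₂, mul_mem hQ₁ hQ₂, fun i => ?_⟩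
    simpa only [transpose_mul, Matrix.mul_assoc] using hQ₂M i

theorem exists_transpose_eq_neg_charpoly_add_eq {S : Matrix ι ι ℝ} (hS : S.IsSymm) :
    ∃ A : Matrix ι ι ℝ, Aᵀ = -A ∧
      (S + A).charpoly = (X - C (S.trace / Fintype.card ι)) ^ Fintype.card ι := by
  -- any linear order on `ι` does, it only fixes what "upper triangular" means
  let _ : LinearOrder ι := LinearOrder.lift' _ (Fintype.equivFin ι).injective
  set c := S.trace / Fintype.card ι
  have htr : (S - c • 1).trace = 0 := by
    rw [trace_sub, trace_smul, trace_one, smul_eq_mul, div_mul_cancel_of_imp, sub_self]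
    intro h
    simp [trace, Fintype.card_eq_zero_iff.mp (by exact_mod_cast h)]
  obtain ⟨Q, hQ, hdiag⟩ := exists_mem_orthogonalGroup_conj_diag_eq_zero htr
  have hQQ := (mem_orthogonalGroup_iff _ _).1 hQ
  have hQQ' := (mem_orthogonalGroup_iff' _ _).1 hQ
  set P := Qᵀ * S * Q
  have hPdiag : ∀ i, P i i = c := fun i => by
    have := hdiag i
    rw [Matrix.mul_sub, Matrix.sub_mul, Matrix.mul_smul, Matrix.mul_one, Matrix.smul_mul,
      hQQ'] at this
    simpa [sub_eq_zero] using this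
  have hPsymm : P.IsSymm := by
    simp [P, IsSymm, transpose_mul, hS.eq, Matrix.mul_assoc]
  refine ⟨Q * upperSkew P * Qᵀ, ?_, ?_⟩
  · rw [transpose_mul, transpose_mul, transpose_transpose, transpose_upperSkew]
    simp [Matrix.mul_assoc]
  · have hS' : S + Q * upperSkew P * Qᵀ = Q * (P + upperSkew P) * Qᵀ := by
      simp only [P, Matrix.mul_add, Matrix.add_mul, ← Matrix.mul_assoc, hQQ, Matrix.one_mul]
      simp [Matrix.mul_assoc, hQQ]
    rw [hS', charpoly_mul_comm, ← Matrix.mul_assoc, hQQ', Matrix.one_mul,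
      charpoly_of_isUpperTriangular _ (isUpperTriangular_add_upperSkew hPsymm)]
    simp [hPdiag]

open scoped MatrixOrder in
theorem exists_transpose_eq_neg_charpoly_one_add_mul_eq {S A : Matrix ι ι ℝ} (hS : S.PosDef)
    (hA : Aᵀ = -A) : ∃ J : Matrix ι ι ℝ, Jᵀ = -J ∧ ((1 + J) * S).charpoly = (S + A).charpoly := by
  set R := CFC.sqrt S
  have hRR : R * R = S := CFC.sqrt_mul_sqrt_self S hS.posSemidef.nonneg
  have hRsymm : Rᵀ = R := by
    simpa using (CFC.sqrt_nonneg S).posSemidef.isHermitian.eq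
  have hR : IsUnit R.det :=
    (isUnit_iff_isUnit_det R).1 ((CFC.isUnit_sqrt_iff S hS.posSemidef.nonneg).2 hS.isUnit)
  refine ⟨R⁻¹ * A * R⁻¹, ?_, ?_⟩
  · rw [transpose_mul, transpose_mul, transpose_nonsing_inv, hRsymm, hA]
    simp [Matrix.mul_assoc]
  · calc ((1 + R⁻¹ * A * R⁻¹) * S).charpoly = ((1 + R⁻¹ * A * R⁻¹) * R * R).charpoly := by
          rw [Matrix.mul_assoc _ R R, hRR]
      _ = (R * ((1 + R⁻¹ * A * R⁻¹) * R)).charpoly := charpoly_mul_comm _ _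
      _ = (S + A).charpoly := by
          rw [Matrix.add_mul, Matrix.mul_add, Matrix.one_mul, hRR]
          simp [Matrix.mul_assoc, mul_nonsing_inv_cancel_left _ _ hR, nonsing_inv_mul _ hR]

theorem eq_of_mem_spectrum_of_charpoly_eq {B : Matrix ι ι ℝ} {c : ℝ} {n : ℕ}
    (hB : B.charpoly = (X - C c) ^ n) {μ : ℂ} (hμ : μ ∈ spectrum ℂ (B.map Complex.ofReal)) :
    μ = c := by
  rw [mem_spectrum_iff_isRoot_charpoly] at hμ
  change (B.map Complex.ofRealHom).charpoly.IsRoot μ at hμ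
  rw [charpoly_map, hB] at hμ
  obtain ⟨h, -⟩ : μ - c = 0 ∧ n ≠ 0 := by simpa using hμ
  exact sub_eq_zero.mp h

end Matrix

/-- For `S` symmetric positive definite:
(a) for every antisymmetric `J`, `(I+J)S` has an eigenvalue with real part `≤ Tr(S)/N`;
(b) there is an antisymmetric `J` with all eigenvalues of `(I+J)S` having real part
`= Tr(S)/N`; consequently the maximum over antisymmetric `J` of the minimal real part
of the spectrum of `(I+J)S` equals `Tr(S)/N` and is attained. -/
theorem optimal_spectral_abscissa
    (N : ℕ) (hN : 1 ≤ N) (S : Matrix (Fin N) (Fin N) ℝ) (hS : S.PosDef) :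
    (∀ J : Matrix (Fin N) (Fin N) ℝ, Jᵀ = -J →
      ∃ μ ∈ spectrum ℂ (((1 + J) * S).map (Complex.ofReal)), μ.re ≤ S.trace / N) ∧
    (∃ J : Matrix (Fin N) (Fin N) ℝ, Jᵀ = -J ∧
      ∀ μ ∈ spectrum ℂ (((1 + J) * S).map (Complex.ofReal)), μ.re = S.trace / N) ∧
    IsGreatest
      {r : ℝ | ∃ J : Matrix (Fin N) (Fin N) ℝ, Jᵀ = -J ∧
        IsLeast {x : ℝ |
          ∃ μ ∈ spectrum ℂ (((1 + J) * S).map (Complex.ofReal)), μ.re = x} r}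
      (S.trace / N) := by
  have : Nonempty (Fin N) := ⟨⟨0, hN⟩⟩
  have hSymm : S.IsSymm := (by simpa using hS.isHermitian.eq : Sᵀ = S)
  have partA : ∀ J : Matrix (Fin N) (Fin N) ℝ, Jᵀ = -J →
      ∃ μ ∈ spectrum ℂ (((1 + J) * S).map Complex.ofReal), μ.re ≤ S.trace / N := fun J hJ => by
    have := exists_mem_spectrum_re_le_trace_div ((1 + J) * S)
    rwa [trace_one_add_mul_eq_trace hSymm hJ, Fintype.card_fin] at this
  obtain ⟨A, hA, hSA⟩ := exists_transpose_eq_neg_charpoly_add_eq hSymm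
  obtain ⟨J, hJ, hJS⟩ := exists_transpose_eq_neg_charpoly_one_add_mul_eq hS hA
  have partB : ∀ μ ∈ spectrum ℂ (((1 + J) * S).map Complex.ofReal), μ.re = S.trace / N :=
    fun μ hμ => by simp [eq_of_mem_spectrum_of_charpoly_eq (hJS.trans hSA) hμ]
  refine ⟨partA, ⟨J, hJ, partB⟩, ⟨J, hJ, ?_, ?_⟩, ?_⟩
  · obtain ⟨μ, hμ, -⟩ := partA J hJ
    exact ⟨μ, hμ, partB μ hμ⟩
  · rintro x ⟨μ, hμ, rfl⟩
    exact (partB μ hμ).ge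
  · rintro r ⟨J', hJ', hleast⟩
    obtain ⟨μ, hμ, hμre⟩ := partA J' hJ'
    exact (hleast.2 ⟨μ, hμ, rfl⟩).trans hμre
end

section
/- Let J̃ be an N×N real antisymmetric matrix, S an N×N real symmetric positive definite matrix, and Q an N×N real symmetric positive definite matrix with eigenvalues λ_1,…,λ_N > 0 (counted with multiplicity) and associated eigenvectors ψ_1,…,ψ_N forming an orthonormal basis of ℝ^N (Qψ_k = λ_k ψ_k). Then the equation J̃Q − QJ̃ = −QS − SQ + (2·Tr(S)/N)·Q holds if and only if both of the following hold: for every k ∈ {1,…,N}, ⟨ψ_k, Sψ_k⟩ = Tr(S)/N; and for all j ≠ k in {1,…,N}, (λ_j − λ_k)·⟨ψ_j, J̃ψ_k⟩ = (λ_k + λ_j)·⟨ψ_j, Sψ_k⟩. -/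
open Matrix

/-!
Expand both sides of the equation in the orthonormal eigenbasis `ψ` of `Q`. Since `Q` is
symmetric, `ψ_j` is also a left eigenvector, so the `(j, k)` coefficient of `J̃Q - QJ̃` is
`(λ_k - λ_j)⟨ψ_j, J̃ψ_k⟩` and that of `-QS - SQ + cQ` is `-(λ_j + λ_k)⟨ψ_j, Sψ_k⟩ + cλ_kδ_jk`.
A matrix is determined by its coefficients in an orthonormal basis, so the equation splits into
the diagonal conditions (divide by `λ_k ≠ 0`) and the off-diagonal ones.
-/

namespace Matrix

variable {n R : Type*} [Fintype n] [CommRing R]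

section Orthonormal

variable [DecidableEq n] {ψ : n → n → R}

theorem of_mul_transpose_eq_one_of_orthonormal (hψ : ∀ j k, ψ j ⬝ᵥ ψ k = if j = k then 1 else 0) :
    of ψ * (of ψ)ᵀ = 1 := by
  ext j k
  simpa [mul_apply, one_apply, dotProduct] using hψ j k

theorem ext_iff_dotProduct_mulVec_orthonormal
    (hψ : ∀ j k, ψ j ⬝ᵥ ψ k = if j = k then 1 else 0) {A B : Matrix n n R} :
    A = B ↔ ∀ j k, ψ j ⬝ᵥ (A *ᵥ ψ k) = ψ j ⬝ᵥ (B *ᵥ ψ k) := by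
  refine ⟨by rintro rfl _ _; rfl, fun h => ?_⟩
  set P := of ψ
  have hPP : Pᵀ * P = 1 := mul_eq_one_comm.mp (of_mul_transpose_eq_one_of_orthonormal hψ)
  have hcancel (X : Matrix n n R) : Pᵀ * (P * X * Pᵀ) * P = X := by
    rw [show Pᵀ * (P * X * Pᵀ) * P = Pᵀ * P * X * (Pᵀ * P) by noncomm_ring, hPP,
      Matrix.one_mul, Matrix.mul_one]
  have hconj : P * A * Pᵀ = P * B * Pᵀ := by
    ext j k
    simp only [mul_mul_apply, transpose_transpose]
    exact h j k
  rw [← hcancel A, hconj, hcancel]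

end Orthonormal

section Eigenvectors

variable {A Q : Matrix n n R} {u v : n → R} {μ ν : R}

theorem dotProduct_mul_mulVec_of_mulVec_eq_smul (hv : Q *ᵥ v = ν • v) :
    u ⬝ᵥ ((A * Q) *ᵥ v) = ν * (u ⬝ᵥ (A *ᵥ v)) := by
  rw [← mulVec_mulVec, hv, mulVec_smul, dotProduct_smul, smul_eq_mul]

theorem dotProduct_mul_mulVec_of_vecMul_eq_smul (hu : u ᵥ* Q = μ • u) :
    u ⬝ᵥ ((Q * A) *ᵥ v) = μ * (u ⬝ᵥ (A *ᵥ v)) := by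
  rw [← mulVec_mulVec, dotProduct_mulVec, hu, smul_dotProduct, smul_eq_mul]

theorem dotProduct_commutator_mulVec (hu : u ᵥ* Q = μ • u) (hv : Q *ᵥ v = ν • v) :
    u ⬝ᵥ ((A * Q - Q * A) *ᵥ v) = (ν - μ) * (u ⬝ᵥ (A *ᵥ v)) := by
  rw [sub_mulVec, dotProduct_sub, dotProduct_mul_mulVec_of_mulVec_eq_smul hv,
    dotProduct_mul_mulVec_of_vecMul_eq_smul hu, sub_mul]

theorem dotProduct_anticommutator_mulVec (hu : u ᵥ* Q = μ • u) (hv : Q *ᵥ v = ν • v) :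
    u ⬝ᵥ ((Q * A + A * Q) *ᵥ v) = (μ + ν) * (u ⬝ᵥ (A *ᵥ v)) := by
  rw [add_mulVec, dotProduct_add, dotProduct_mul_mulVec_of_mulVec_eq_smul hv,
    dotProduct_mul_mulVec_of_vecMul_eq_smul hu, add_mul]

end Eigenvectors

end Matrix

theorem J1_iff_conditions_general
    (N : ℕ) (S Q J : Matrix (Fin N) (Fin N) ℝ)
    (hQ : Q.PosDef)
    (lam : Fin N → ℝ) (ψ : Fin N → (Fin N → ℝ))
    (hlam : ∀ k, 0 < lam k)
    (hortho : ∀ j k, ψ j ⬝ᵥ ψ k = if j = k then 1 else 0)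
    (heig : ∀ k, Q *ᵥ ψ k = lam k • ψ k) :
    (J * Q - Q * J = -(Q * S) - S * Q + (2 * S.trace / N) • Q) ↔
      ((∀ k, ψ k ⬝ᵥ (S *ᵥ ψ k) = S.trace / N) ∧
        ∀ j k, j ≠ k →
          (lam j - lam k) * (ψ j ⬝ᵥ (J *ᵥ ψ k)) =
            (lam k + lam j) * (ψ j ⬝ᵥ (S *ᵥ ψ k))) := by
  have hleft (j : Fin N) : ψ j ᵥ* Q = lam j • ψ j := by
    rw [← mulVec_transpose, show Qᵀ = Q from hQ.1, heig]
  have hrhs (j k : Fin N) :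
      ψ j ⬝ᵥ ((-(Q * S) - S * Q + (2 * S.trace / N) • Q) *ᵥ ψ k) =
        -((lam j + lam k) * (ψ j ⬝ᵥ (S *ᵥ ψ k))) +
          2 * S.trace / N * lam k * (if j = k then 1 else 0) := by
    rw [← neg_add', add_mulVec, neg_mulVec, dotProduct_add, dotProduct_neg,
      dotProduct_anticommutator_mulVec (hleft j) (heig k), smul_mulVec, dotProduct_smul,
      heig, dotProduct_smul, hortho, smul_eq_mul, smul_eq_mul, mul_assoc]
  rw [ext_iff_dotProduct_mulVec_orthonormal hortho]
  simp only [dotProduct_commutator_mulVec (hleft _) (heig _), hrhs]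
  refine ⟨fun h => ⟨fun k => ?_, fun j k hjk => ?_⟩, fun ⟨hdiag, hoff⟩ j k => ?_⟩
  · refine mul_left_cancel₀ (hlam k).ne' ?_
    have hkk := h k k
    rw [if_pos rfl] at hkk
    linear_combination hkk / 2
  · have hjk' := h j k
    rw [if_neg hjk] at hjk'
    linear_combination -hjk'
  · by_cases hjk : j = k
    · subst hjk
      rw [hdiag, if_pos rfl]
      ring
    · rw [if_neg hjk]
      linear_combination -hoff j k hjk

/-- With `J̃` antisymmetric, `S, Q` symmetric positive definite, the
eigenvalues `λ_k > 0` of `Q` with orthonormal eigenvectors `ψ_k`, the equation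
`J̃Q - QJ̃ = -QS - SQ + (2Tr(S)/N)Q` holds iff `⟨ψ_k, Sψ_k⟩ = Tr(S)/N` for all `k` and
`(λ_j - λ_k)⟨ψ_j, J̃ψ_k⟩ = (λ_k + λ_j)⟨ψ_j, Sψ_k⟩` for all `j ≠ k`. -/
theorem J1_iff_conditions
    (N : ℕ) (hN : 1 ≤ N) (S Q J : Matrix (Fin N) (Fin N) ℝ)
    (hS : S.PosDef) (hQ : Q.PosDef) (hJ : Jᵀ = -J)
    (lam : Fin N → ℝ) (ψ : Fin N → (Fin N → ℝ))
    (hlam : ∀ k, 0 < lam k)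
    (hortho : ∀ j k, ψ j ⬝ᵥ ψ k = if j = k then 1 else 0)
    (heig : ∀ k, Q *ᵥ ψ k = lam k • ψ k) :
    (J * Q - Q * J = -(Q * S) - S * Q + (2 * S.trace / N) • Q) ↔
      ((∀ k, ψ k ⬝ᵥ (S *ᵥ ψ k) = S.trace / N) ∧
        ∀ j k, j ≠ k →
          (lam j - lam k) * (ψ j ⬝ᵥ (J *ᵥ ψ k)) =
            (lam k + lam j) * (ψ j ⬝ᵥ (S *ᵥ ψ k))) :=
  J1_iff_conditions_general N S Q J hQ lam ψ hlam hortho heig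
end

section
/- For every N×N real symmetric positive definite matrix S, there exists an orthonormal basis ψ_1,…,ψ_N of ℝ^N such that ⟨ψ_k, Sψ_k⟩ = Tr(S)/N for every k ∈ {1,…,N}. -/
/-!
If `T` is symmetric and traceless, its eigenvalues sum to zero, so either one of them vanishes or
there are eigenvectors `e`, `f` with eigenvalues `μ < 0 < λ`; then `√λ e + √(-μ) f` is a nonzero
vector on which the quadratic form `⟪x, T x⟫` vanishes. Normalise it to `v`. The compression of
`T` to `v^⊥` is again symmetric and, since `tr T = ⟪v, T v⟫ + tr (compression)`, traceless, so
induction on the dimension yields an orthonormal basis on which all diagonal entries of `T`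
vanish. Applied to `T - (tr T / n) • 1`, this gives diagonal entries `tr T / n`.
-/

open Matrix Module
open scoped InnerProductSpace

section

variable {𝕜 E : Type*} [RCLike 𝕜] [NormedAddCommGroup E] [InnerProductSpace 𝕜 E]

lemma Orthonormal.cons_orthogonal_span_singleton {n : ℕ} {v : E} (hv : ‖v‖ = 1)
    {φ : Fin n → (𝕜 ∙ v)ᗮ} (hφ : Orthonormal 𝕜 φ) :
    Orthonormal 𝕜 (Fin.cons v fun k => (φ k : E)) := by
  have hφE : Orthonormal 𝕜 fun k => (φ k : E) := hφ.comp_linearIsometry (𝕜 ∙ v)ᗮ.subtypeₗᵢ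
  have hperp (k : Fin n) : ⟪v, φ k⟫_𝕜 = 0 :=
    Submodule.mem_orthogonal_singleton_iff_inner_right.mp (φ k).2
  refine ⟨Fin.cases hv hφE.1, fun a b hab => ?_⟩
  cases a using Fin.cases <;> cases b using Fin.cases
  · exact absurd rfl hab
  · simpa using hperp _
  · simpa using inner_eq_zero_symm.mp (hperp _)
  · simpa using hφE.2 (ne_of_apply_ne Fin.succ hab)

namespace LinearMap

noncomputable def compress (T : E →ₗ[𝕜] E) (K : Submodule 𝕜 E) [K.HasOrthogonalProjection] :
    K →ₗ[𝕜] K :=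
  K.orthogonalProjectionOnto.toLinearMap ∘ₗ T ∘ₗ K.subtype

variable {T : E →ₗ[𝕜] E}

@[simp]
lemma inner_compress_apply {K : Submodule 𝕜 E} [K.HasOrthogonalProjection] (x y : K) :
    ⟪x, T.compress K y⟫_𝕜 = ⟪(x : E), T y⟫_𝕜 := by
  simp [compress]

lemma IsSymmetric.compress (hT : T.IsSymmetric) (K : Submodule 𝕜 E) [K.HasOrthogonalProjection] :
    (T.compress K).IsSymmetric := by
  intro x y
  rw [inner_compress_apply, ← hT, ← inner_conj_symm, inner_compress_apply, inner_conj_symm]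

lemma exists_norm_eq_one_inner_self_apply_eq_zero {w : E} (hw : w ≠ 0)
    (hTw : ⟪w, T w⟫_𝕜 = 0) : ∃ v : E, ‖v‖ = 1 ∧ ⟪v, T v⟫_𝕜 = 0 :=
  ⟨(‖w‖⁻¹ : 𝕜) • w, norm_smul_inv_norm hw, by simp [inner_smul_left, inner_smul_right, hTw]⟩

variable [FiniteDimensional 𝕜 E]

lemma trace_starProjection_comp (K : Submodule 𝕜 E) [K.HasOrthogonalProjection] :
    trace 𝕜 E (K.starProjection.toLinearMap ∘ₗ T) = trace 𝕜 K (T.compress K) := by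
  rw [compress, ← comp_assoc, trace_comp_comm' K.subtype]
  rfl

lemma trace_starProjection_unit_singleton_comp {v : E} (hv : ‖v‖ = 1) :
    trace 𝕜 E ((𝕜 ∙ v).starProjection.toLinearMap ∘ₗ T) = ⟪v, T v⟫_𝕜 := by
  have hrankOne :
      (𝕜 ∙ v).starProjection.toLinearMap ∘ₗ T = ((innerₛₗ 𝕜 v).comp T).smulRight v := by
    ext x
    simp [Submodule.starProjection_unit_singleton 𝕜 hv]
  simp [hrankOne]

lemma trace_eq_inner_add_trace_compress {v : E} (hv : ‖v‖ = 1) :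
    trace 𝕜 E T = ⟪v, T v⟫_𝕜 + trace 𝕜 _ (T.compress (𝕜 ∙ v)ᗮ) := by
  have hsplit : T = (𝕜 ∙ v).starProjection.toLinearMap ∘ₗ T
      + (𝕜 ∙ v)ᗮ.starProjection.toLinearMap ∘ₗ T := by
    ext x
    simp
  conv_lhs => rw [hsplit]
  rw [map_add, trace_starProjection_unit_singleton_comp hv, trace_starProjection_comp]

namespace IsSymmetric

lemma conj_trace (hT : T.IsSymmetric) : starRingEnd 𝕜 (trace 𝕜 E T) = trace 𝕜 E T := by
  simp [hT.trace_eq_sum_eigenvalues rfl]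

lemma exists_ne_zero_inner_self_apply_eq_zero (hT : T.IsSymmetric) (htr : trace 𝕜 E T = 0)
    (hE : 0 < finrank 𝕜 E) : ∃ w : E, w ≠ 0 ∧ ⟪w, T w⟫_𝕜 = 0 := by
  set e := hT.eigenvectorBasis rfl
  set μ := hT.eigenvalues rfl
  have he : ∀ i, T (e i) = (μ i : 𝕜) • e i := hT.apply_eigenvectorBasis rfl
  have hμ : ∑ i, μ i = 0 := by simpa [htr] using (hT.re_trace_eq_sum_eigenvalues rfl).symm
  by_cases hzero : ∃ i, μ i = 0
  · obtain ⟨i, hi⟩ := hzero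
    exact ⟨e i, e.orthonormal.ne_zero i, by simp [he, hi]⟩
  push Not at hzero
  have hne : ∃ i ∈ Finset.univ, μ i ≠ 0 := ⟨⟨0, hE⟩, Finset.mem_univ _, hzero _⟩
  obtain ⟨j, -, hj⟩ := Finset.exists_pos_of_sum_zero_of_exists_nonzero μ hμ hne
  obtain ⟨i, -, hi⟩ := Finset.exists_pos_of_sum_zero_of_exists_nonzero (s := Finset.univ) (-μ)
    (by simp [hμ]) (by simpa using hne)
  rw [Pi.neg_apply, neg_pos] at hi
  have hij : i ≠ j := by rintro rfl; linarith
  have hij0 : ⟪e i, e j⟫_𝕜 = 0 := e.orthonormal.2 hij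
  have hji0 : ⟪e j, e i⟫_𝕜 = 0 := e.orthonormal.2 hij.symm
  refine ⟨(√(μ j) : 𝕜) • e i + (√(-μ i) : 𝕜) • e j, fun h => ?_, ?_⟩
  · exact (Real.sqrt_pos.2 hj).ne' (by
      simpa [inner_add_right, inner_smul_right, hij0] using congrArg (⟪e i, ·⟫_𝕜) h)
  · simp only [map_add, map_smul, he, inner_add_right, inner_smul_right, inner_add_left,
      inner_smul_left, RCLike.conj_ofReal, inner_self_eq_norm_sq_to_K, OrthonormalBasis.norm_eq_one,
      map_one, one_pow, mul_one, hji0, mul_zero, add_zero, hij0, zero_add]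
    have hsq_j : √(μ j) ^ 2 = μ j := Real.sq_sqrt hj.le
    have hsq_i : √(-μ i) ^ 2 = -μ i := Real.sq_sqrt (neg_nonneg.mpr hi.le)
    exact_mod_cast (by linear_combination μ i * hsq_j + μ j * hsq_i :
      √(μ j) * (μ i * √(μ j)) + √(-μ i) * (μ j * √(-μ i)) = 0)

lemma exists_orthonormal_inner_self_apply_eq_zero (hT : T.IsSymmetric) (htr : trace 𝕜 E T = 0)
    {n : ℕ} (hn : finrank 𝕜 E = n) :
    ∃ ψ : Fin n → E, Orthonormal 𝕜 ψ ∧ ∀ k, ⟪ψ k, T (ψ k)⟫_𝕜 = 0 := by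
  induction n generalizing E with
  | zero => exact ⟨finZeroElim, ⟨finZeroElim, finZeroElim⟩, finZeroElim⟩
  | succ n ih =>
    obtain ⟨w, hw, hTw⟩ := hT.exists_ne_zero_inner_self_apply_eq_zero htr (by omega)
    obtain ⟨v, hv, hTv⟩ := exists_norm_eq_one_inner_self_apply_eq_zero hw hTw
    have : Fact (finrank 𝕜 E = n + 1) := ⟨hn⟩
    have hv0 : v ≠ 0 := norm_ne_zero_iff.mp (by simp [hv])
    obtain ⟨φ, hφ, hTφ⟩ := ih (hT.compress (𝕜 ∙ v)ᗮ)
      (by simpa [trace_eq_inner_add_trace_compress hv, hTv] using htr)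
      (Submodule.finrank_orthogonal_span_singleton hv0)
    refine ⟨Fin.cons v fun k => (φ k : E), hφ.cons_orthogonal_span_singleton hv, fun k => ?_⟩
    cases k using Fin.cases
    · simpa using hTv
    · exact (inner_compress_apply _ _).symm.trans (hTφ _)

theorem exists_orthonormal_inner_self_apply_eq_trace_div (hT : T.IsSymmetric) {n : ℕ}
    (hn : finrank 𝕜 E = n) :
    ∃ ψ : Fin n → E, Orthonormal 𝕜 ψ ∧ ∀ k, ⟪ψ k, T (ψ k)⟫_𝕜 = trace 𝕜 E T / n := by
  obtain rfl | hn0 := eq_or_ne n 0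
  · exact ⟨finZeroElim, ⟨finZeroElim, finZeroElim⟩, finZeroElim⟩
  set c := trace 𝕜 E T / n
  have hTc : (T - c • 1).IsSymmetric :=
    hT.sub (IsSymmetric.one.smul (by simp [c, hT.conj_trace]))
  obtain ⟨ψ, hψ, hTψ⟩ := hTc.exists_orthonormal_inner_self_apply_eq_zero
    (by simp [c, hn, hn0]) hn
  refine ⟨ψ, hψ, fun k => ?_⟩
  simpa [inner_sub_right, inner_smul_right, hψ.1 k, sub_eq_zero] using hTψ k

end IsSymmetric

end LinearMap

end

theorem exists_orthonormal_basis_equal_diagonal_general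
    (N : ℕ) (S : Matrix (Fin N) (Fin N) ℝ) (hS : S.PosDef) :
    ∃ ψ : Fin N → (Fin N → ℝ),
      (∀ j k, ψ j ⬝ᵥ ψ k = if j = k then 1 else 0) ∧
      (∀ k, ψ k ⬝ᵥ (S *ᵥ ψ k) = S.trace / N) := by
  have hT : (toEuclideanLin S).IsSymmetric := isSymmetric_toEuclideanLin_iff.mpr hS.isHermitian
  have htr : LinearMap.trace ℝ _ (toEuclideanLin S) = S.trace :=
    trace_toLin_eq S (PiLp.basisFun 2 ℝ (Fin N))
  obtain ⟨ψ, hψ, hTψ⟩ :=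
    hT.exists_orthonormal_inner_self_apply_eq_trace_div finrank_euclideanSpace_fin
  refine ⟨fun k => ψ k, fun j k => ?_, fun k => ?_⟩
  · simpa [EuclideanSpace.inner_eq_star_dotProduct, dotProduct_comm]
      using orthonormal_iff_ite.mp hψ j k
  · simpa [EuclideanSpace.inner_eq_star_dotProduct, dotProduct_comm, htr] using hTψ k

/-- For every symmetric positive definite `S` there is an orthonormal basis
`ψ_1, …, ψ_N` of `ℝ^N` such that `⟨ψ_k, Sψ_k⟩ = Tr(S)/N` for every `k`. -/
theorem exists_orthonormal_basis_equal_diagonal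
    (N : ℕ) (hN : 1 ≤ N) (S : Matrix (Fin N) (Fin N) ℝ) (hS : S.PosDef) :
    ∃ ψ : Fin N → (Fin N → ℝ),
      (∀ j k, ψ j ⬝ᵥ ψ k = if j = k then 1 else 0) ∧
      (∀ k, ψ k ⬝ᵥ (S *ᵥ ψ k) = S.trace / N) :=
  exists_orthonormal_basis_equal_diagonal_general N S hS
end

section
/- Let S, Q be N×N real symmetric positive definite matrices and J̃ an N×N real antisymmetric matrix satisfying J̃Q − QJ̃ = −QS − SQ + (2·Tr(S)/N)·Q, and let J = S^{−1/2}·J̃·S^{−1/2} where S^{1/2} is the positive definite square root of S. Then for every t ≥ 0: ‖exp(−(S + J̃)·t)‖ ≤ κ(Q)^{1/2}·exp(−(Tr(S)/N)·t) and ‖exp(−(I + J)·S·t)‖ ≤ κ(Q⁻¹S)^{1/2}·exp(−(Tr(S)/N)·t). -/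
/-! For `A = S + J̃` the hypothesis on `J̃` is the Lyapunov identity `A Q + Q Aᵀ = 2μ Q` with
`μ = Tr(S)/N`. It gives `Q Aᵀ Q⁻¹ = 2μ - A`, so conjugating `e^{-tAᵀ}` by `Q` yields
`e^{-tA} Q e^{-tAᵀ} = e^{-2μt} Q`. Writing `Q = T Tᵀ`, this says that `e^{μt} T⁻¹ e^{-tA} T` is
orthogonal, whence `‖e^{-tA}‖ ≤ ‖T‖ ‖T⁻¹‖ e^{-μt} = κ(Q)^{1/2} e^{-μt}`.

The generator `(I + J) S = S^{-1/2} A S^{1/2}` satisfies the same identity with the symmetric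
matrix `S^{-1/2} Q S^{-1/2}`, which is similar to `(Q⁻¹S)⁻¹`. The norm of a symmetric matrix is its
spectral radius, a similarity invariant bounded by the norm, so its condition number is at most
`κ(Q⁻¹S)`. -/

open Matrix
open scoped Matrix.Norms.L2Operator

open scoped ComplexOrder in
/-- The square root of a positive semidefinite matrix, as defined in the older Mathlib. -/
noncomputable def Matrix.PosSemidef.sqrt {n 𝕜 : Type*} [Fintype n] [RCLike 𝕜] [DecidableEq n]
    {A : Matrix n n 𝕜} (hA : PosSemidef A) : Matrix n n 𝕜 :=
  hA.1.eigenvectorUnitary.1 * diagonal ((↑) ∘ (√·) ∘ hA.1.eigenvalues) *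
  (star hA.1.eigenvectorUnitary : Matrix n n 𝕜)

namespace Matrix

section RCLike

open scoped ComplexOrder

variable {n 𝕜 : Type*} [Fintype n] [DecidableEq n] [RCLike 𝕜]

lemma PosSemidef.posSemidef_sqrt {A : Matrix n n 𝕜} (hA : A.PosSemidef) :
    hA.sqrt.PosSemidef := by
  have hD : (diagonal (((↑) ∘ (√·) ∘ hA.1.eigenvalues : n → 𝕜))).PosSemidef :=
    posSemidef_diagonal_iff.mpr fun i => RCLike.ofReal_nonneg.mpr (Real.sqrt_nonneg _)
  have := hD.mul_mul_conjTranspose_same (hA.1.eigenvectorUnitary : Matrix n n 𝕜)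
  rwa [← star_eq_conjTranspose] at this

lemma PosSemidef.sqrt_mul_self {A : Matrix n n 𝕜} (hA : A.PosSemidef) :
    hA.sqrt * hA.sqrt = A := by
  have hU : (star hA.1.eigenvectorUnitary : Matrix n n 𝕜) * hA.1.eigenvectorUnitary = 1 :=
    Unitary.coe_star_mul_self _
  conv_rhs => rw [hA.1.spectral_theorem]
  simp only [sqrt, Unitary.conjStarAlgAut_apply]
  set U : Matrix n n 𝕜 := hA.1.eigenvectorUnitary.1
  set D := diagonal (((↑) ∘ (√·) ∘ hA.1.eigenvalues : n → 𝕜))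
  have e : U * D * star U * (U * D * star U) = U * (D * (star U * U) * D) * star U := by
    simp only [Matrix.mul_assoc]
  rw [e, hU, Matrix.mul_one, diagonal_mul_diagonal]
  refine congrArg (fun d => U * diagonal d * star U) (funext fun i => ?_)
  simp only [Function.comp_apply]
  rw [← RCLike.ofReal_mul, Real.mul_self_sqrt (hA.eigenvalues_nonneg i)]

lemma PosDef.isUnit_sqrt {A : Matrix n n 𝕜} (hA : A.PosDef) : IsUnit hA.posSemidef.sqrt :=
  isUnit_of_mul_isUnit_left (hA.posSemidef.sqrt_mul_self ▸ hA.isUnit)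

theorem l2_opNorm_le_of_isHermitian_of_eq_conj {P M R : Matrix n n 𝕜} (hP : P.IsHermitian)
    (hR : IsUnit R) (h : P = R * M * R⁻¹) : ‖P‖ ≤ ‖M‖ := by
  -- `spectralRadius_le_nnnorm` needs a nontrivial space
  cases isEmpty_or_nonempty n
  · simp [Subsingleton.elim P 0]
  set f := (toEuclideanCLM (n := n) (𝕜 := 𝕜)).toAlgEquiv
  have hspec : spectrum 𝕜 (f P) = spectrum 𝕜 (f M) := by
    have := spectrum.units_conjugate (R := 𝕜) (a := M) (u := hR.unit)
    rwa [coe_units_inv, IsUnit.unit_spec, ← h, ← AlgEquiv.spectrum_eq f P,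
      ← AlgEquiv.spectrum_eq f M] at this
  have hsa : IsSelfAdjoint (f P) := hP.isSelfAdjoint.map (toEuclideanCLM (n := n) (𝕜 := 𝕜))
  show ‖f P‖₊ ≤ ‖f M‖₊
  rw [← ENNReal.coe_le_coe, ← ContinuousLinearMap.spectralRadius_eq_nnnorm (f P) hsa]
  unfold spectralRadius
  rw [hspec]
  exact spectrum.spectralRadius_le_nnnorm _

end RCLike

section Real

open NormedSpace (exp)

variable {n : Type*} [Fintype n] [DecidableEq n]

theorem l2_opNorm_transpose_mul_self (A : Matrix n n ℝ) : ‖Aᵀ * A‖ = ‖A‖ * ‖A‖ := by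
  rw [← conjTranspose_eq_transpose_of_trivial, l2_opNorm_conjTranspose_mul_self]

theorem l2_opNorm_mul_transpose_self (A : Matrix n n ℝ) : ‖A * Aᵀ‖ = ‖A‖ * ‖A‖ := by
  have := l2_opNorm_transpose_mul_self Aᵀ
  rwa [transpose_transpose, ← conjTranspose_eq_transpose_of_trivial,
    l2_opNorm_conjTranspose] at this

theorem l2_opNorm_one_le : ‖(1 : Matrix n n ℝ)‖ ≤ 1 := by
  rw [cstar_norm_def, map_one]
  exact ContinuousLinearMap.norm_id_le

theorem l2_opNorm_le_of_mul_mul_transpose_eq {M T : Matrix n n ℝ} {c : ℝ} (hT : IsUnit T)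
    (hc : 0 ≤ c) (hM : M * (T * Tᵀ) * Mᵀ = c ^ 2 • (T * Tᵀ)) : ‖M‖ ≤ ‖T‖ * ‖T⁻¹‖ * c := by
  have hTdet := (isUnit_iff_isUnit_det T).mp hT
  set X := T⁻¹ * M * T
  have hX : X * Xᵀ = c ^ 2 • (1 : Matrix n n ℝ) := by
    calc X * Xᵀ = T⁻¹ * (M * (T * Tᵀ) * Mᵀ) * (T⁻¹)ᵀ := by
          simp only [X, transpose_mul, Matrix.mul_assoc]
      _ = c ^ 2 • (1 : Matrix n n ℝ) := by
          rw [hM, Matrix.mul_smul, Matrix.smul_mul, ← Matrix.mul_assoc, nonsing_inv_mul _ hTdet,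
            Matrix.one_mul, ← transpose_mul, nonsing_inv_mul _ hTdet, transpose_one]
  have hXc : ‖X‖ ≤ c := by
    refine (mul_self_le_mul_self_iff (norm_nonneg X) hc).mpr ?_
    rw [← l2_opNorm_mul_transpose_self, hX, norm_smul, Real.norm_of_nonneg (sq_nonneg c), ← sq]
    exact mul_le_of_le_one_right (sq_nonneg c) l2_opNorm_one_le
  have hMX : M = T * X * T⁻¹ := by
    simp only [X, Matrix.mul_assoc, mul_nonsing_inv _ hTdet, Matrix.mul_one,
      mul_nonsing_inv_cancel_left _ _ hTdet]
  calc ‖M‖ ≤ ‖T‖ * ‖X‖ * ‖T⁻¹‖ := hMX ▸ norm_mul₃_le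
    _ ≤ ‖T‖ * c * ‖T⁻¹‖ := by gcongr
    _ = ‖T‖ * ‖T⁻¹‖ * c := by ring

theorem exp_smul_one_add (s : ℝ) (X : Matrix n n ℝ) :
    exp (s • (1 : Matrix n n ℝ) + X) = Real.exp s • exp X := by
  rw [exp_add_of_commute _ _ ((Commute.one_left X).smul_left s), ← Algebra.algebraMap_eq_smul_one,
    ← NormedSpace.algebraMap_exp_comm, Real.exp_eq_exp_ℝ, Algebra.algebraMap_eq_smul_one,
    smul_one_mul]

theorem exp_neg_smul_mul_mul_transpose_of_lyapunov {A Q : Matrix n n ℝ} {c : ℝ} (hQ : IsUnit Q)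
    (h : A * Q + Q * Aᵀ = (2 * c) • Q) (t : ℝ) :
    exp (-(t • A)) * Q * (exp (-(t • A)))ᵀ = Real.exp (-(2 * c * t)) • Q := by
  have hQdet := (isUnit_iff_isUnit_det Q).mp hQ
  have hQAQ : Q * Aᵀ * Q⁻¹ = (2 * c) • (1 : Matrix n n ℝ) - A := by
    rw [← mul_nonsing_inv Q hQdet, ← smul_mul, ← h, add_mul, mul_assoc A,
      mul_nonsing_inv Q hQdet, mul_one, add_sub_cancel_left]
  have hconj : Q * (-(t • Aᵀ)) * Q⁻¹ = (-(2 * c * t)) • (1 : Matrix n n ℝ) + t • A := by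
    rw [Matrix.mul_neg, Matrix.neg_mul, Matrix.mul_smul, Matrix.smul_mul, hQAQ]
    module
  have hswap : Q * (exp (-(t • A)))ᵀ = Real.exp (-(2 * c * t)) • (exp (t • A) * Q) := by
    have := exp_units_conj hQ.unit (-(t • Aᵀ))
    rw [coe_units_inv, IsUnit.unit_spec, hconj, exp_smul_one_add] at this
    rw [← exp_transpose, transpose_neg, transpose_smul, ← Matrix.smul_mul, this,
      nonsing_inv_mul_cancel_right _ _ hQdet]
  rw [Matrix.mul_assoc, hswap, Matrix.mul_smul, ← Matrix.mul_assoc,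
    ← exp_add_of_commute _ _ ((Commute.refl (t • A)).neg_left), neg_add_cancel,
    NormedSpace.exp_zero, Matrix.one_mul]

theorem norm_exp_neg_smul_le_of_lyapunov {A Q : Matrix n n ℝ} {c : ℝ} (hQ : Q.PosDef)
    (h : A * Q + Q * Aᵀ = (2 * c) • Q) (t : ℝ) :
    ‖exp (-(t • A))‖ ≤ √(‖Q‖ * ‖Q⁻¹‖) * Real.exp (-(c * t)) := by
  set T := hQ.posSemidef.sqrt
  have hTsymm : Tᵀ = T := (isHermitian_iff_isSymm.mp hQ.posSemidef.posSemidef_sqrt.isHermitian).eq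
  have hQT : Q = T * Tᵀ := by rw [hTsymm, hQ.posSemidef.sqrt_mul_self]
  have hcond : ‖T‖ * ‖T⁻¹‖ = √(‖Q‖ * ‖Q⁻¹‖) := by
    rw [hQT, mul_inv_rev, ← transpose_nonsing_inv, l2_opNorm_mul_transpose_self,
      l2_opNorm_transpose_mul_self, mul_mul_mul_comm, Real.sqrt_mul_self (by positivity)]
  rw [← hcond]
  refine l2_opNorm_le_of_mul_mul_transpose_eq hQ.isUnit_sqrt (Real.exp_nonneg _) ?_
  rw [← hQT, exp_neg_smul_mul_mul_transpose_of_lyapunov hQ.isUnit h, sq, ← Real.exp_add]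
  ring_nf

theorem lyapunov_conj {A Q T : Matrix n n ℝ} {k : ℝ} (hT : IsUnit T)
    (h : A * Q + Q * Aᵀ = k • Q) :
    T * A * T⁻¹ * (T * Q * Tᵀ) + T * Q * Tᵀ * (T * A * T⁻¹)ᵀ = k • (T * Q * Tᵀ) := by
  have hTdet := (isUnit_iff_isUnit_det T).mp hT
  have hTtdet : IsUnit Tᵀ.det := by rwa [det_transpose]
  calc _ = T * (A * Q + Q * Aᵀ) * Tᵀ := by
        simp only [transpose_mul, transpose_nonsing_inv, Matrix.mul_assoc, Matrix.mul_add,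
          Matrix.add_mul, nonsing_inv_mul_cancel_left _ _ hTdet,
          mul_nonsing_inv_cancel_left _ _ hTtdet]
    _ = k • (T * Q * Tᵀ) := by rw [h, Matrix.mul_smul, Matrix.smul_mul]

theorem norm_exp_neg_smul_conj_le_of_lyapunov {A Q R : Matrix n n ℝ} {c : ℝ} (hQ : Q.PosDef)
    (hR : IsUnit R) (hRsymm : Rᵀ = R) (h : A * Q + Q * Aᵀ = (2 * c) • Q) (t : ℝ) :
    ‖exp (-(t • (R⁻¹ * A * R)))‖ ≤
      √(‖Q⁻¹ * (R * R)‖ * ‖(Q⁻¹ * (R * R))⁻¹‖) * Real.exp (-(c * t)) := by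
  have hRdet := (isUnit_iff_isUnit_det R).mp hR
  have hQdet := (isUnit_iff_isUnit_det Q).mp hQ.isUnit
  have hRinv : (R⁻¹)ᵀ = R⁻¹ := by rw [transpose_nonsing_inv, hRsymm]
  set Q' := R⁻¹ * Q * R⁻¹
  have hQ' : Q'.PosDef := by
    have := hQ.conjTranspose_mul_mul_same
      (mulVec_injective_iff_isUnit.mpr (isUnit_nonsing_inv_iff.mpr hR))
    rwa [conjTranspose_eq_transpose_of_trivial, hRinv] at this
  have hL : R⁻¹ * A * R * Q' + Q' * (R⁻¹ * A * R)ᵀ = (2 * c) • Q' := by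
    have := lyapunov_conj (isUnit_nonsing_inv_iff.mpr hR) h
    rwa [nonsing_inv_nonsing_inv _ hRdet, hRinv] at this
  have hsim : Q' = R * (Q⁻¹ * (R * R))⁻¹ * R⁻¹ := by
    rw [mul_inv_rev, mul_inv_rev, nonsing_inv_nonsing_inv _ hQdet]
    simp only [Q', Matrix.mul_assoc, mul_nonsing_inv_cancel_left _ _ hRdet]
  have hsim_inv : Q'⁻¹ = R * (Q⁻¹ * (R * R)) * R⁻¹ := by
    rw [mul_inv_rev, mul_inv_rev, nonsing_inv_nonsing_inv _ hRdet]
    simp only [Matrix.mul_assoc, mul_nonsing_inv _ hRdet, Matrix.mul_one]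
  calc _ ≤ √(‖Q'‖ * ‖Q'⁻¹‖) * Real.exp (-(c * t)) := norm_exp_neg_smul_le_of_lyapunov hQ' hL t
    _ ≤ _ := by
      rw [mul_comm ‖Q⁻¹ * (R * R)‖]
      gcongr
      · exact l2_opNorm_le_of_isHermitian_of_eq_conj hQ'.isHermitian hR hsim
      · exact l2_opNorm_le_of_isHermitian_of_eq_conj hQ'.isHermitian.inv hR hsim_inv

end Real

end Matrix

theorem semigroup_decay_opt_general
    (N : ℕ) (S Q J' : Matrix (Fin N) (Fin N) ℝ)
    (hS : S.PosDef) (hQ : Q.PosDef) (hJ' : J'ᵀ = -J')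
    (heq : J' * Q - Q * J' = -(Q * S) - S * Q + (2 * S.trace / N) • Q)
    (J : Matrix (Fin N) (Fin N) ℝ)
    (hJdef : J = (hS.posSemidef.sqrt)⁻¹ * J' * (hS.posSemidef.sqrt)⁻¹) :
    ∀ t : ℝ, 0 ≤ t →
      ‖NormedSpace.exp (-(t • (S + J')))‖ ≤
          Real.sqrt (‖Q‖ * ‖Q⁻¹‖) * Real.exp (-(S.trace / N) * t) ∧
      ‖NormedSpace.exp (-(t • ((1 + J) * S)))‖ ≤
          Real.sqrt (‖Q⁻¹ * S‖ * ‖(Q⁻¹ * S)⁻¹‖) * Real.exp (-(S.trace / N) * t) := by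
  intro t _
  set R := hS.posSemidef.sqrt
  have hR : IsUnit R := hS.isUnit_sqrt
  have hRR : R * R = S := hS.posSemidef.sqrt_mul_self
  have hRsymm : Rᵀ = R := (isHermitian_iff_isSymm.mp hS.posSemidef.posSemidef_sqrt.isHermitian).eq
  have hSsymm : Sᵀ = S := (isHermitian_iff_isSymm.mp hS.isHermitian).eq
  have hL : (S + J') * Q + Q * (S + J')ᵀ = (2 * (S.trace / N)) • Q := by
    calc _ = J' * Q - Q * J' + Q * S + S * Q := by
          rw [transpose_add, hSsymm, hJ']; noncomm_ring
      _ = _ := by rw [heq, mul_div_assoc]; abel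
  have hB : (1 + J) * S = R⁻¹ * (S + J') * R := by
    rw [hJdef, ← hRR]
    simp only [Matrix.add_mul, Matrix.mul_add, Matrix.one_mul, Matrix.mul_assoc,
      nonsing_inv_mul_cancel_left _ _ ((isUnit_iff_isUnit_det R).mp hR)]
  rw [neg_mul, hB]
  refine ⟨norm_exp_neg_smul_le_of_lyapunov hQ hL t, ?_⟩
  simpa only [hRR] using norm_exp_neg_smul_conj_le_of_lyapunov hQ hR hRsymm hL t

/-- For `(J̃, Q)` satisfying `J̃Q - QJ̃ = -QS - SQ + (2Tr(S)/N)Q` and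
`J = S^{-1/2} J̃ S^{-1/2}`, one has for all `t ≥ 0` the semigroup bounds
`‖exp(-(S+J̃)t)‖ ≤ κ(Q)^{1/2} e^{-(Tr(S)/N)t}` and
`‖exp(-(I+J)St)‖ ≤ κ(Q⁻¹S)^{1/2} e^{-(Tr(S)/N)t}` (operator norms induced by the
Euclidean norm, `κ(M) = ‖M‖·‖M⁻¹‖`). -/
theorem semigroup_decay_opt
    (N : ℕ) (hN : 1 ≤ N) (S Q J' : Matrix (Fin N) (Fin N) ℝ)
    (hS : S.PosDef) (hQ : Q.PosDef) (hJ' : J'ᵀ = -J')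
    (heq : J' * Q - Q * J' = -(Q * S) - S * Q + (2 * S.trace / N) • Q)
    (J : Matrix (Fin N) (Fin N) ℝ)
    (hJdef : J = (hS.posSemidef.sqrt)⁻¹ * J' * (hS.posSemidef.sqrt)⁻¹) :
    ∀ t : ℝ, 0 ≤ t →
      ‖NormedSpace.exp (-(t • (S + J')))‖ ≤
          Real.sqrt (‖Q‖ * ‖Q⁻¹‖) * Real.exp (-(S.trace / N) * t) ∧
      ‖NormedSpace.exp (-(t • ((1 + J) * S)))‖ ≤
          Real.sqrt (‖Q⁻¹ * S‖ * ‖(Q⁻¹ * S)⁻¹‖) * Real.exp (-(S.trace / N) * t) :=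
  semigroup_decay_opt_general N S Q J' hS hQ hJ' heq J hJdef
end

section
/- Let S, Q be N×N real symmetric positive definite matrices and J̃ an N×N real antisymmetric matrix satisfying J̃Q − QJ̃ = −QS − SQ + (2·Tr(S)/N)·Q, and set J = S^{−1/2}·J̃·S^{−1/2}. Suppose Σ : [0,∞) → M_N(ℝ) is differentiable and satisfies dΣ_t/dt = −(I + J)·S·Σ_t − Σ_t·S·(I − J) + 2·I for all t ≥ 0. Then for every t ≥ 0: ‖Σ_t − S⁻¹‖ ≤ κ(Q⁻¹S)·exp(−2·(Tr(S)/N)·t)·‖Σ₀ − S⁻¹‖. -/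
/-!
With `A = (1 + J) S`, the error `Δ t = Σ t - S⁻¹` solves `Δ' = -A Δ - Δ Aᵀ`, so
`Δ t = e^{-tA} Δ 0 e^{-tAᵀ}` and `‖Δ t‖ ≤ ‖e^{-tA}‖² ‖Δ 0‖`. Conjugation by `S^{1/2}` turns `A` into
`S + J̃ = λ + M` with `λ = Tr S / N`, and the commutator identity for `J̃` says exactly that
`M Q + Q Mᵀ = 0`, i.e. `Q^{-1/2} M Q^{1/2}` is skew, so its exponential is orthogonal. Hence
`‖e^{-tA}‖ ≤ e^{-λt} ‖S^{-1/2} Q^{1/2}‖ ‖Q^{-1/2} S^{1/2}‖`, and the squares of these two norms are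
norms of symmetric matrices similar to `S⁻¹ Q` and `Q⁻¹ S`. A self-adjoint element has the least
norm in its similarity class, because `‖p‖ ^ 2 ^ k = ‖p ^ 2 ^ k‖` grows no faster than the powers of
any conjugate of `p`.
-/

open Matrix
open scoped Matrix.Norms.L2Operator MatrixOrder

open NormedSpace

theorem le_of_forall_pow_two_pow_le_mul {a b c : ℝ} (hb : 0 ≤ b)
    (h : ∀ k : ℕ, a ^ 2 ^ k ≤ c * b ^ 2 ^ k) : a ≤ b := by
  rcases hb.eq_or_lt with rfl | hb
  · simpa using h 0
  by_contra! hba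
  have hr : 1 < a / b := (one_lt_div hb).mpr hba
  obtain ⟨k, hk⟩ := pow_unbounded_of_one_lt c hr
  refine (h k).not_gt ?_
  calc c * b ^ 2 ^ k < (a / b) ^ 2 ^ k * b ^ 2 ^ k := by
        gcongr
        exact hk.trans_le (pow_le_pow_right₀ hr.le k.lt_two_pow_self.le)
    _ = a ^ 2 ^ k := by rw [div_pow, div_mul_cancel₀ _ (by positivity)]

theorem IsSelfAdjoint.norm_le_of_eq_units_conj {E : Type*} [NormedRing E] [StarRing E]
    [CStarRing E] {p x : E} (hp : IsSelfAdjoint p) (u : Eˣ) (h : p = u * x * ↑u⁻¹) :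
    ‖p‖ ≤ ‖x‖ :=
  le_of_forall_pow_two_pow_le_mul (norm_nonneg x) fun k => calc
    ‖p‖ ^ 2 ^ k = ‖(u : E) * x ^ 2 ^ k * ↑u⁻¹‖ := by
      rw [← hp.norm_pow_two_pow, h, Units.conj_pow]
    _ ≤ ‖(u : E)‖ * ‖x ^ 2 ^ k‖ * ‖(↑u⁻¹ : E)‖ := norm_mul₃_le
    _ ≤ ‖(u : E)‖ * ‖x‖ ^ 2 ^ k * ‖(↑u⁻¹ : E)‖ := by
      gcongr; exact norm_pow_le' x (by positivity)
    _ = ‖(u : E)‖ * ‖(↑u⁻¹ : E)‖ * ‖x‖ ^ 2 ^ k := by ring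

theorem IsSelfAdjoint.units_inv {R : Type*} [Monoid R] [StarMul R] {u : Rˣ}
    (hu : IsSelfAdjoint (u : R)) : IsSelfAdjoint (↑u⁻¹ : R) := by
  rw [IsSelfAdjoint, ← Units.coe_star_inv]
  congr
  ext
  exact hu.star_eq

theorem units_inv_mul_mul_mem_skewAdjoint {R : Type*} [Ring R] [StarRing R] {m : R} (c : Rˣ)
    (hc : IsSelfAdjoint (c : R)) (hm : m * (c * c) + (c * c) * star m = 0) :
    (↑c⁻¹ * m * c : R) ∈ skewAdjoint R := by
  rw [skewAdjoint.mem_iff]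
  calc star (↑c⁻¹ * m * c : R) = ↑c⁻¹ * ((c * c) * star m) * ↑c⁻¹ := by
        simp only [star_mul, hc.units_inv.star_eq, hc.star_eq, mul_assoc,
          Units.inv_mul_cancel_left]
    _ = -(↑c⁻¹ * m * c) := by
        rw [eq_neg_of_add_eq_zero_right hm]
        simp only [mul_neg, neg_mul, mul_assoc, Units.mul_inv, mul_one]

theorem sq_norm_units_inv_mul_le {E : Type*} [NormedRing E] [StarRing E] [CStarRing E] (b c : Eˣ)
    (hb : IsSelfAdjoint (b : E)) (hc : IsSelfAdjoint (c : E)) :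
    ‖(↑b⁻¹ * c : E)‖ ^ 2 ≤ ‖(↑b⁻¹ * ↑b⁻¹ * (c * c) : E)‖ := by
  rw [sq, ← CStarRing.norm_star_mul_self]
  refine (IsSelfAdjoint.star_mul_self _).norm_le_of_eq_units_conj c ?_
  rw [star_mul, hc.star_eq, hb.units_inv.star_eq]
  simp only [mul_assoc, Units.mul_inv, mul_one]

section BanachAlgebra

variable {𝔸 : Type*} [NormedRing 𝔸] [NormedAlgebra ℝ 𝔸] [CompleteSpace 𝔸]

theorem exists_unitary_exp_smul_eq_units_conj [StarRing 𝔸] [ContinuousStar 𝔸] [StarModule ℝ 𝔸]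
    {m : 𝔸} (c : 𝔸ˣ) (hc : IsSelfAdjoint (c : 𝔸)) (hm : m * (c * c) + (c * c) * star m = 0)
    (t : ℝ) : ∃ g ∈ unitary 𝔸, exp (t • m) = c * g * ↑c⁻¹ := by
  -- the algebraic lemmas on `exp` are stated for Banach algebras over `ℚ`
  let +nondep : NormedAlgebra ℚ 𝔸 := .restrictScalars ℚ ℝ 𝔸
  exact ⟨exp (t • (↑c⁻¹ * m * c)),
    exp_mem_unitary_of_mem_skewAdjoint
      (skewAdjoint.smul_mem t (units_inv_mul_mul_mem_skewAdjoint c hc hm)),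
    by rw [← NormedSpace.exp_units_conj, mul_smul_comm, smul_mul_assoc]; simp [mul_assoc]⟩

theorem exp_add_algebraMap (x : 𝔸) (l : ℝ) :
    exp (x + algebraMap ℝ 𝔸 l) = Real.exp l • exp x := by
  let +nondep : NormedAlgebra ℚ 𝔸 := .restrictScalars ℚ ℝ 𝔸
  rw [exp_add_of_commute (Algebra.commutes l x).symm, ← algebraMap_exp_comm, Real.exp_eq_exp_ℝ,
    Algebra.smul_def]
  exact (Algebra.commutes _ _).symm

theorem eq_exp_neg_smul_mul_mul_exp_neg_smul_of_hasDerivWithinAt {a b : 𝔸} {f : ℝ → 𝔸}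
    (hf : ∀ t ∈ Set.Ici (0 : ℝ), HasDerivWithinAt f (-(a * f t) - f t * b) (Set.Ici 0) t)
    {t : ℝ} (ht : 0 ≤ t) : f t = exp ((-t) • a) * f 0 * exp ((-t) • b) := by
  let +nondep : NormedAlgebra ℚ 𝔸 := .restrictScalars ℚ ℝ 𝔸
  set g := fun w : ℝ => exp (w • a) * f w * exp (w • b)
  have hg : ∀ w ∈ Set.Ici (0 : ℝ), HasDerivWithinAt g 0 (Set.Ici 0) w := by
    intro w hw
    refine (((hasDerivAt_exp_smul_const a w).hasDerivWithinAt.mul (hf w hw)).mul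
      (hasDerivAt_exp_smul_const' b w).hasDerivWithinAt).congr_deriv ?_
    simp only [Pi.mul_apply, add_mul, mul_sub, sub_mul, mul_neg, neg_mul, mul_assoc]
    abel
  have hconst : g t = g 0 :=
    constant_of_has_deriv_right_zero
      (fun w hw => (hg w hw.1).continuousWithinAt.mono Set.Icc_subset_Ici_self)
      (fun w hw => (hg w hw.1).mono (Set.Ici_subset_Ici.mpr hw.1)) t (Set.right_mem_Icc.mpr ht)
  have hinv : ∀ x : 𝔸, exp (-x) * exp x = 1 ∧ exp x * exp (-x) = 1 := fun x =>
    ⟨by rw [← exp_add_of_commute (Commute.refl x).neg_left, neg_add_cancel, exp_zero],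
     by rw [← exp_add_of_commute (Commute.refl x).neg_right, add_neg_cancel, exp_zero]⟩
  calc f t = exp ((-t) • a) * g t * exp ((-t) • b) := by
        simp only [g, neg_smul, ← mul_assoc, (hinv _).1]
        simp only [mul_assoc, (hinv _).2, one_mul, mul_one]
    _ = exp ((-t) • a) * f 0 * exp ((-t) • b) := by simp [hconst, g]

end BanachAlgebra

section CStarRing

variable {𝔸 : Type*} [NormedRing 𝔸] [NormedAlgebra ℝ 𝔸] [CompleteSpace 𝔸] [StarRing 𝔸]
  [CStarRing 𝔸] [StarModule ℝ 𝔸]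

theorem norm_le_sq_norm_exp_neg_smul_mul_of_hasDerivWithinAt {a : 𝔸} {f : ℝ → 𝔸}
    (hf : ∀ t ∈ Set.Ici (0 : ℝ), HasDerivWithinAt f (-(a * f t) - f t * star a) (Set.Ici 0) t)
    {t : ℝ} (ht : 0 ≤ t) : ‖f t‖ ≤ ‖exp ((-t) • a)‖ ^ 2 * ‖f 0‖ := by
  have hstar : exp ((-t) • star a) = star (exp ((-t) • a)) := by
    rw [star_exp, star_smul, star_trivial (-t)]
  calc ‖f t‖ = ‖exp ((-t) • a) * f 0 * star (exp ((-t) • a))‖ := by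
        rw [eq_exp_neg_smul_mul_mul_exp_neg_smul_of_hasDerivWithinAt hf ht, hstar]
    _ ≤ ‖exp ((-t) • a)‖ * ‖f 0‖ * ‖star (exp ((-t) • a))‖ := norm_mul₃_le
    _ = ‖exp ((-t) • a)‖ ^ 2 * ‖f 0‖ := by rw [norm_star]; ring

theorem norm_exp_smul_units_conj_le {k : 𝔸} {l : ℝ} (b c : 𝔸ˣ) (hc : IsSelfAdjoint (c : 𝔸))
    (hk : (k - algebraMap ℝ 𝔸 l) * (c * c) + (c * c) * star (k - algebraMap ℝ 𝔸 l) = 0)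
    (t : ℝ) :
    ‖exp (t • (↑b⁻¹ * k * b))‖ ≤ Real.exp (t * l) * (‖(↑b⁻¹ * c : 𝔸)‖ * ‖(↑c⁻¹ * b : 𝔸)‖) := by
  let +nondep : NormedAlgebra ℚ 𝔸 := .restrictScalars ℚ ℝ 𝔸
  obtain ⟨g, hg, hexp⟩ := exists_unitary_exp_smul_eq_units_conj c hc hk t
  have hsplit : t • k = t • (k - algebraMap ℝ 𝔸 l) + algebraMap ℝ 𝔸 (t * l) := by
    rw [smul_sub, map_mul, ← Algebra.smul_def, sub_add_cancel]
  have hconj : exp (t • (↑b⁻¹ * k * b)) = Real.exp (t * l) • ((↑b⁻¹ * c) * (g * (↑c⁻¹ * b))) := by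
    rw [← smul_mul_assoc, ← mul_smul_comm, NormedSpace.exp_units_conj', hsplit, exp_add_algebraMap,
      hexp]
    simp only [smul_mul_assoc, mul_smul_comm, mul_assoc]
  rw [hconj, norm_smul, Real.norm_eq_abs, Real.abs_exp]
  gcongr
  calc ‖(↑b⁻¹ * c : 𝔸) * (g * (↑c⁻¹ * b))‖ ≤ ‖(↑b⁻¹ * c : 𝔸)‖ * ‖g * (↑c⁻¹ * b)‖ := norm_mul_le _ _
    _ = ‖(↑b⁻¹ * c : 𝔸)‖ * ‖(↑c⁻¹ * b : 𝔸)‖ := by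
      rw [CStarRing.norm_coe_unitary_mul ⟨g, hg⟩]

end CStarRing

theorem add_sub_algebraMap_mul_add_mul_star_eq_zero {R : Type*} [Ring R] [StarRing R]
    [Algebra ℝ R] [StarModule ℝ R] {s q j : R} {l : ℝ} (hs : IsSelfAdjoint s)
    (hj : star j = -j) (h : j * q - q * j = -(q * s) - s * q + (2 * l) • q) :
    (s + j - algebraMap ℝ R l) * q + q * star (s + j - algebraMap ℝ R l) = 0 := by
  rw [star_sub, star_add, hs.star_eq, hj, ← algebraMap_star_comm, star_trivial]
  have hlq : algebraMap ℝ R l * q = l • q := (Algebra.smul_def l q).symm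
  have hql : q * algebraMap ℝ R l = l • q := by rw [← Algebra.commutes, hlq]
  have hj' : j * q = q * j + (-(q * s) - s * q + (2 * l) • q) := by rw [← h]; abel
  simp only [add_mul, sub_mul, mul_add, mul_sub, mul_neg, hlq, hql, hj']
  module

theorem star_one_add_mul_eq_mul_one_sub {R : Type*} [Ring R] [StarRing R] {s j : R}
    (hs : IsSelfAdjoint s) (hj : star j = -j) : star ((1 + j) * s) = s * (1 - j) := by
  rw [star_mul, star_add, star_one, hj, hs.star_eq, sub_eq_add_neg]

section Matrix

variable {n : Type*} [Fintype n] [DecidableEq n]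

theorem Matrix.lyapunov_field_eq_sub_inv {α : Type*} [CommRing α] {S J X : Matrix n n α}
    (hS : IsUnit S.det) :
    -((1 + J) * S * X) - X * (S * (1 - J)) + (2 : α) • 1 =
      -((1 + J) * S * (X - S⁻¹)) - (X - S⁻¹) * (S * (1 - J)) := by
  have hA : (1 + J) * S * S⁻¹ = 1 + J := Matrix.mul_nonsing_inv_cancel_right _ _ hS
  have hA' : S⁻¹ * (S * (1 - J)) = 1 - J := Matrix.nonsing_inv_mul_cancel_left _ _ hS
  rw [Matrix.mul_sub ((1 + J) * S), Matrix.sub_mul X, hA, hA', two_smul]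
  abel

theorem Matrix.one_add_inv_mul_mul_inv_mul_eq {α : Type*} [CommRing α]
    {B S J : Matrix n n α} (hB : IsUnit B.det) (hBS : B * B = S) :
    (1 + B⁻¹ * J * B⁻¹) * S = B⁻¹ * (S + J) * B := by
  subst hBS
  simp only [add_mul, mul_add, Matrix.one_mul, Matrix.mul_assoc,
    Matrix.nonsing_inv_mul_cancel_left _ _ hB]

variable {𝕜 : Type*} [RCLike 𝕜]

open scoped ComplexOrder in
theorem Matrix.PosDef.isUnit_sqrt_s10 {S : Matrix n n 𝕜} (hS : S.PosDef) : IsUnit (CFC.sqrt S) :=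
  (CFC.isUnit_sqrt_iff S hS.posSemidef.nonneg).mpr hS.isUnit

theorem Matrix.sq_norm_inv_mul_mul_norm_inv_mul_le {B C : Matrix n n 𝕜} (hB : IsUnit B)
    (hC : IsUnit C) (hBh : IsSelfAdjoint B) (hCh : IsSelfAdjoint C) :
    (‖B⁻¹ * C‖ * ‖C⁻¹ * B‖) ^ 2 ≤ ‖(C * C)⁻¹ * (B * B)‖ * ‖((C * C)⁻¹ * (B * B))⁻¹‖ := by
  have hBC := sq_norm_units_inv_mul_le hB.unit hC.unit hBh hCh
  have hCB := sq_norm_units_inv_mul_le hC.unit hB.unit hCh hBh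
  simp only [Matrix.coe_units_inv, IsUnit.unit_spec] at hBC hCB
  have hCC : IsUnit (C * C).det := (hC.mul hC).map Matrix.detMonoidHom
  have hSQ : ((C * C)⁻¹ * (B * B))⁻¹ = B⁻¹ * B⁻¹ * (C * C) := by
    rw [Matrix.mul_inv_rev, Matrix.nonsing_inv_nonsing_inv _ hCC, Matrix.mul_inv_rev]
  rw [hSQ, Matrix.mul_inv_rev, mul_pow, mul_comm ‖C⁻¹ * C⁻¹ * _‖]
  exact mul_le_mul hBC hCB (sq_nonneg _) (norm_nonneg _)

theorem Matrix.sq_norm_exp_neg_smul_le {S Q J' : Matrix n n ℝ} {l : ℝ} (hS : S.PosDef)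
    (hQ : Q.PosDef) (hJ' : star J' = -J')
    (h : J' * Q - Q * J' = -(Q * S) - S * Q + (2 * l) • Q) (t : ℝ) :
    ‖exp ((-t) • ((1 + (CFC.sqrt S)⁻¹ * J' * (CFC.sqrt S)⁻¹) * S))‖ ^ 2 ≤
      ‖Q⁻¹ * S‖ * ‖(Q⁻¹ * S)⁻¹‖ * Real.exp (-2 * l * t) := by
  have hBB : CFC.sqrt S * CFC.sqrt S = S := CFC.sqrt_mul_sqrt_self S hS.posSemidef.nonneg
  have hCC : CFC.sqrt Q * CFC.sqrt Q = Q := CFC.sqrt_mul_sqrt_self Q hQ.posSemidef.nonneg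
  have hA := Matrix.one_add_inv_mul_mul_inv_mul_eq (J := J')
    (hS.isUnit_sqrt_s10.map Matrix.detMonoidHom) hBB
  have hskew := add_sub_algebraMap_mul_add_mul_star_eq_zero hS.isHermitian hJ' h
  rw [← hCC] at hskew
  have hexp := norm_exp_smul_units_conj_le hS.isUnit_sqrt_s10.unit hQ.isUnit_sqrt_s10.unit
    (CFC.sqrt_nonneg Q).isSelfAdjoint hskew (-t)
  simp only [Matrix.coe_units_inv, IsUnit.unit_spec, ← hA] at hexp
  have hκ := Matrix.sq_norm_inv_mul_mul_norm_inv_mul_le hS.isUnit_sqrt_s10 hQ.isUnit_sqrt_s10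
    (CFC.sqrt_nonneg S).isSelfAdjoint (CFC.sqrt_nonneg Q).isSelfAdjoint
  rw [hBB, hCC] at hκ
  set κ := ‖(CFC.sqrt S)⁻¹ * CFC.sqrt Q‖ * ‖(CFC.sqrt Q)⁻¹ * CFC.sqrt S‖
  calc _ ≤ (Real.exp (-t * l) * κ) ^ 2 := pow_le_pow_left₀ (norm_nonneg _) hexp 2
    _ = κ ^ 2 * Real.exp (-2 * l * t) := by
      rw [mul_pow, ← Real.exp_nat_mul]
      ring_nf
    _ ≤ _ := by gcongr

end Matrix

theorem covariance_decay_general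
    (N : ℕ) (S Q J' : Matrix (Fin N) (Fin N) ℝ)
    (hS : S.PosDef) (hQ : Q.PosDef) (hJ' : J'ᵀ = -J')
    (heq : J' * Q - Q * J' = -(Q * S) - S * Q + (2 * S.trace / N) • Q)
    (J : Matrix (Fin N) (Fin N) ℝ)
    (hJdef : J = (CFC.sqrt S)⁻¹ * J' * (CFC.sqrt S)⁻¹)
    (Sig : ℝ → Matrix (Fin N) (Fin N) ℝ)
    (hSig : ∀ t ∈ Set.Ici (0 : ℝ), HasDerivWithinAt Sig
      (-((1 + J) * S * Sig t) - Sig t * (S * (1 - J)) +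
        (2 : ℝ) • (1 : Matrix (Fin N) (Fin N) ℝ)) (Set.Ici (0 : ℝ)) t) :
    ∀ t : ℝ, 0 ≤ t →
      ‖Sig t - S⁻¹‖ ≤
        (‖Q⁻¹ * S‖ * ‖(Q⁻¹ * S)⁻¹‖) * Real.exp (-2 * (S.trace / N) * t) *
          ‖Sig 0 - S⁻¹‖ := by
  intro t ht
  have hJ'star : star J' = -J' := by
    rw [Matrix.star_eq_conjTranspose, Matrix.conjTranspose_eq_transpose_of_trivial, hJ']
  have hJstar : star J = -J := by
    have hBinv : star (CFC.sqrt S)⁻¹ = (CFC.sqrt S)⁻¹ :=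
      (CFC.sqrt_nonneg S).posSemidef.isHermitian.inv
    have := skewAdjoint.conjugate hJ'star (CFC.sqrt S)⁻¹
    rwa [hBinv, skewAdjoint.mem_iff, ← hJdef] at this
  have hf : ∀ u ∈ Set.Ici (0 : ℝ), HasDerivWithinAt (fun u => Sig u - S⁻¹)
      (-((1 + J) * S * (Sig u - S⁻¹)) - (Sig u - S⁻¹) * star ((1 + J) * S)) (Set.Ici 0) u := by
    intro u hu
    rw [star_one_add_mul_eq_mul_one_sub hS.isHermitian hJstar,
      ← Matrix.lyapunov_field_eq_sub_inv (hS.isUnit.map Matrix.detMonoidHom)]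
    exact (hSig u hu).sub_const _
  have hdecay := Matrix.sq_norm_exp_neg_smul_le hS hQ hJ'star (by rw [heq, mul_div_assoc]) t
  rw [← hJdef] at hdecay
  calc ‖Sig t - S⁻¹‖ ≤ ‖exp ((-t) • ((1 + J) * S))‖ ^ 2 * ‖Sig 0 - S⁻¹‖ :=
        norm_le_sq_norm_exp_neg_smul_mul_of_hasDerivWithinAt hf ht
    _ ≤ _ := by gcongr

/-- For `(J̃, Q)` satisfying `J̃Q - QJ̃ = -QS - SQ + (2Tr(S)/N)Q` and
`J = S^{-1/2} J̃ S^{-1/2}`, any solution of the Lyapunov equation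
`dΣ_t/dt = -(I+J)SΣ_t - Σ_t S(I-J) + 2I` on `[0,∞)` satisfies
`‖Σ_t - S⁻¹‖ ≤ κ(Q⁻¹S) e^{-2(Tr(S)/N)t} ‖Σ₀ - S⁻¹‖` for all `t ≥ 0`. -/
theorem covariance_decay
    (N : ℕ) (hN : 1 ≤ N) (S Q J' : Matrix (Fin N) (Fin N) ℝ)
    (hS : S.PosDef) (hQ : Q.PosDef) (hJ' : J'ᵀ = -J')
    (heq : J' * Q - Q * J' = -(Q * S) - S * Q + (2 * S.trace / N) • Q)
    (J : Matrix (Fin N) (Fin N) ℝ)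
    (hJdef : J = (CFC.sqrt S)⁻¹ * J' * (CFC.sqrt S)⁻¹)
    (Sig : ℝ → Matrix (Fin N) (Fin N) ℝ)
    (hSig : ∀ t ∈ Set.Ici (0 : ℝ), HasDerivWithinAt Sig
      (-((1 + J) * S * Sig t) - Sig t * (S * (1 - J)) +
        (2 : ℝ) • (1 : Matrix (Fin N) (Fin N) ℝ)) (Set.Ici (0 : ℝ)) t) :
    ∀ t : ℝ, 0 ≤ t →
      ‖Sig t - S⁻¹‖ ≤
        (‖Q⁻¹ * S‖ * ‖(Q⁻¹ * S)⁻¹‖) * Real.exp (-2 * (S.trace / N) * t) *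
          ‖Sig 0 - S⁻¹‖ :=
  covariance_decay_general N S Q J' hS hQ hJ' heq J hJdef Sig hSig
end

section
/- Let H be a complex Hilbert space, let L be a bounded linear operator on H, and let α ∈ (0, π/4] be such that for every u ∈ H one has Re⟨u, Lu⟩ ≥ 0 and |Im⟨u, Lu⟩| ≤ tan(π/2 − 2α)·Re⟨u, Lu⟩ (i.e. the numerical range of L lies in the sector |arg z| ≤ π/2 − 2α). Then for every t ≥ 0, the operator norm satisfies ‖t·L·exp(−t·L)‖ ≤ 1/(π·sin²α). -/
/-!
For accretive `B` the function `r ↦ ‖exp (-rB) u‖²` has derivative `-2 Re ⟪v, Bv⟫ ≤ 0` at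
`v = exp (-rB) u`, so `exp (-B)` is a contraction. The sector condition on the numerical range of
`L` makes `zL` accretive for every `z` in the dual sector `|arg z| ≤ 2α`, so the entire function
`z ↦ exp (-zL)` is bounded by `1` on any disk inscribed in that sector. Cauchy's estimate composed
with a disk automorphism (the Schwarz–Pick bound `‖g' z‖ ≤ ρ / (ρ² - |z - c|²)`) then controls its
derivative `-L exp (-zL)` at `z = 1`. The sector condition is invariant under `L ↦ tL`, so the
estimate at `z = 1` for `tL` is the claim.
-/

open Complex Metric ComplexConjugate NormedSpace

section DiscAutomorphism

variable {a w : ℂ}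

noncomputable def discAutomorphism (a w : ℂ) : ℂ := (w + a) / (1 + conj a * w)

theorem sq_norm_one_add_conj_mul_sub_sq_norm_add (a w : ℂ) :
    ‖1 + conj a * w‖ ^ 2 - ‖w + a‖ ^ 2 = (1 - ‖a‖ ^ 2) * (1 - ‖w‖ ^ 2) := by
  simp only [Complex.sq_norm, normSq_apply, add_re, add_im, mul_re, mul_im, conj_re, conj_im,
    one_re, one_im]
  ring

theorem one_add_conj_mul_ne_zero (ha : ‖a‖ < 1) (hw : ‖w‖ ≤ 1) : 1 + conj a * w ≠ 0 := by
  intro h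
  have : ‖conj a * w‖ = 1 := by rw [eq_neg_of_add_eq_zero_right h, norm_neg, norm_one]
  rw [norm_mul, RCLike.norm_conj] at this
  nlinarith [norm_nonneg a, norm_nonneg w]

theorem norm_discAutomorphism_lt_one (ha : ‖a‖ < 1) (hw : ‖w‖ < 1) :
    ‖discAutomorphism a w‖ < 1 := by
  have hden := one_add_conj_mul_ne_zero ha hw.le
  rw [discAutomorphism, norm_div, div_lt_one (norm_pos_iff.2 hden),
    ← sq_lt_sq₀ (norm_nonneg _) (norm_nonneg _), ← sub_pos,
    sq_norm_one_add_conj_mul_sub_sq_norm_add]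
  have : ‖a‖ ^ 2 < 1 := by nlinarith [norm_nonneg a]
  have : ‖w‖ ^ 2 < 1 := by nlinarith [norm_nonneg w]
  apply mul_pos <;> linarith

theorem norm_discAutomorphism_eq_one (ha : ‖a‖ < 1) (hw : ‖w‖ = 1) :
    ‖discAutomorphism a w‖ = 1 := by
  have hden := one_add_conj_mul_ne_zero ha hw.le
  rw [discAutomorphism, norm_div, div_eq_one_iff_eq (norm_ne_zero_iff.2 hden),
    ← sq_eq_sq₀ (norm_nonneg _) (norm_nonneg _), ← sub_eq_zero, ← neg_eq_zero, neg_sub,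
    sq_norm_one_add_conj_mul_sub_sq_norm_add, hw]
  ring

theorem differentiableOn_discAutomorphism (ha : ‖a‖ < 1) :
    DifferentiableOn ℂ (discAutomorphism a) (closedBall 0 1) := fun w hw =>
  ((differentiableAt_id.add_const a).div ((differentiableAt_id.const_mul _).const_add 1)
    (one_add_conj_mul_ne_zero ha (by simpa using hw))).differentiableWithinAt

theorem hasDerivAt_discAutomorphism_zero (a : ℂ) :
    HasDerivAt (discAutomorphism a) (1 - a * conj a) 0 := by
  have := ((hasDerivAt_id (0 : ℂ)).add_const a).div
    (((hasDerivAt_id (0 : ℂ)).const_mul (conj a)).const_add 1) (by simp)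
  exact this.congr_deriv (by simp)

end DiscAutomorphism

theorem norm_deriv_le_mul_div_of_forall_mem_sphere_norm_le {F : Type*} [NormedAddCommGroup F]
    [NormedSpace ℂ F] {g : ℂ → F} {c z : ℂ} {ρ M : ℝ} (hg : DiffContOnCl ℂ g (ball c ρ))
    (hM : ∀ w ∈ sphere c ρ, ‖g w‖ ≤ M) (hz : z ∈ ball c ρ) :
    ‖deriv g z‖ ≤ M * ρ / (ρ ^ 2 - ‖z - c‖ ^ 2) := by
  have hρ : 0 < ρ := pos_of_mem_ball hz
  set a := (z - c) / ρ
  have ha : ‖a‖ < 1 := by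
    rw [norm_div, norm_real, Real.norm_of_nonneg hρ.le, div_lt_one hρ, ← dist_eq_norm]
    exact hz
  set φ : ℂ → ℂ := fun w => c + ρ * discAutomorphism a w
  have hφ0 : φ 0 = z := by
    simp [φ, discAutomorphism, a, mul_div_cancel₀ _ (ofReal_ne_zero.2 hρ.ne')]
  have hφ' : HasDerivAt φ (ρ * (1 - a * conj a)) 0 :=
    ((hasDerivAt_discAutomorphism_zero a).const_mul _).const_add c
  have hdist : ∀ w, dist (φ w) c = ρ * ‖discAutomorphism a w‖ := fun w => by
    simp [φ, dist_eq_norm, Real.norm_of_nonneg hρ.le]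
  have hφ_ball : Set.MapsTo φ (ball 0 1) (ball c ρ) := fun w hw => by
    rw [mem_ball, hdist]
    exact mul_lt_of_lt_one_right hρ (norm_discAutomorphism_lt_one ha (mem_ball_zero_iff.1 hw))
  have hφ_sphere : Set.MapsTo φ (sphere 0 1) (sphere c ρ) := fun w hw => by
    rw [mem_sphere, hdist, norm_discAutomorphism_eq_one ha (mem_sphere_zero_iff_norm.1 hw),
      mul_one]
  have hφ_diff : DiffContOnCl ℂ φ (ball 0 1) := by
    refine DifferentiableOn.diffContOnCl ?_
    rw [closure_ball 0 one_ne_zero]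
    exact (differentiableOn_discAutomorphism ha).const_mul _ |>.const_add c
  have hcomp : HasDerivAt (g ∘ φ) ((ρ * (1 - a * conj a)) • deriv g z) 0 := by
    rw [← hφ0] at hz ⊢
    exact (hg.differentiableAt isOpen_ball hz).hasDerivAt.scomp 0 hφ'
  have hcauchy := norm_deriv_le_of_forall_mem_sphere_norm_le one_pos (hg.comp hφ_diff hφ_ball)
    fun w hw => hM _ (hφ_sphere hw)
  have hnorm : ‖(ρ : ℂ) * (1 - a * conj a)‖ = (ρ ^ 2 - ‖z - c‖ ^ 2) / ρ := by
    have hza : ‖z - c‖ = ρ * ‖a‖ := by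
      rw [norm_div, norm_real, Real.norm_of_nonneg hρ.le, mul_div_cancel₀ _ hρ.ne']
    rw [mul_conj, normSq_eq_norm_sq, ← ofReal_one, ← ofReal_sub, ← ofReal_mul, norm_real,
      Real.norm_of_nonneg (mul_nonneg hρ.le (by nlinarith [norm_nonneg a])), hza]
    field_simp
  have hpos : 0 < ρ ^ 2 - ‖z - c‖ ^ 2 := by
    have := mem_ball_iff_norm.1 hz
    nlinarith [norm_nonneg (z - c)]
  rw [hcomp.deriv, norm_smul, div_one, hnorm] at hcauchy
  rw [le_div_iff₀ hpos]
  rw [div_mul_eq_mul_div, div_le_iff₀ hρ] at hcauchy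
  linarith

theorem re_mul_nonneg_of_mem_dual_sectors {s k : ℝ} (hs : 0 < s) {z w : ℂ} (hw : 0 ≤ w.re)
    (hw_im : s * |w.im| ≤ k * w.re) (hz_im : k * |z.im| ≤ s * z.re) : 0 ≤ (z * w).re := by
  have h1 : s * (|z.im| * |w.im|) ≤ s * (z.re * w.re) := by
    nlinarith [mul_le_mul_of_nonneg_left hw_im (abs_nonneg z.im),
      mul_le_mul_of_nonneg_right hz_im hw]
  have h2 : z.im * w.im ≤ |z.im| * |w.im| := (le_abs_self _).trans (abs_mul _ _).le
  rw [mul_re]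
  nlinarith [le_of_mul_le_mul_left h1 hs]

theorem abs_im_mul_le_re_mul_of_mem_closedBall {s k c : ℝ} (hsk : s ^ 2 + k ^ 2 = 1) {z : ℂ}
    (hz : z ∈ closedBall (c : ℂ) (s * c)) : k * |z.im| ≤ s * z.re := by
  have h := mem_closedBall.1 hz
  rw [dist_eq_norm] at h
  have hsc : 0 ≤ s * c := (norm_nonneg _).trans h
  rw [← sq_le_sq₀ (norm_nonneg _) hsc, Complex.sq_norm, normSq_apply] at h
  have hlagrange : (s * (z.re - c) - k * |z.im|) ^ 2 + (k * (z.re - c) + s * |z.im|) ^ 2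
      = (z.re - c) ^ 2 + z.im ^ 2 := by
    linear_combination ((z.re - c) ^ 2 + z.im ^ 2) * hsk + (s ^ 2 + k ^ 2) * sq_abs z.im
  have hbound : (s * (z.re - c) - k * |z.im|) ^ 2 ≤ (s * c) ^ 2 := by
    simp only [sub_re, ofReal_re, sub_im, ofReal_im, sub_zero] at h
    nlinarith [sq_nonneg (k * (z.re - c) + s * |z.im|)]
  linarith [(abs_le_of_sq_le_sq' hbound hsc).1]

theorem inscribed_disk_estimate {k s c : ℝ} (hk0 : 0 ≤ k) (hk1 : k < 1)
    (hsk : s ^ 2 + k ^ 2 = 1) (hc : c * (1 + 2 * k) = 3) :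
    s * c / ((s * c) ^ 2 - (c - 1) ^ 2) ≤ 2 / (Real.pi * (1 - k)) := by
  have hc1 : 1 < c := by nlinarith
  have hc3 : c ≤ 3 := by nlinarith
  have hs1 : s ≤ 1 := by nlinarith
  have hD : (s * c) ^ 2 - (c - 1) ^ 2 = (c - 1) * (13 - c) / 4 := by
    linear_combination c ^ 2 * hsk - ((3 - c) / 2 + k * c) / 2 * hc
  have hck : c * (1 - k) = 3 * (c - 1) / 2 := by linear_combination -hc / 2
  rw [hD, div_le_div_iff₀ (by nlinarith) (mul_pos Real.pi_pos (by linarith))]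
  have hπ : 3 * Real.pi * s ≤ 13 - c := by nlinarith [Real.pi_lt_d2, Real.pi_pos]
  calc s * c * (Real.pi * (1 - k)) = Real.pi * s * (3 * (c - 1) / 2) := by
        rw [← hck]; ring
    _ ≤ 2 * ((c - 1) * (13 - c) / 4) := by nlinarith

section Operator

variable {H : Type*} [NormedAddCommGroup H] [InnerProductSpace ℂ H] [CompleteSpace H]

theorem norm_exp_neg_le_one_of_forall_re_inner_nonneg (B : H →L[ℂ] H)
    (hB : ∀ u, 0 ≤ (inner ℂ u (B u)).re) : ‖exp (-B)‖ ≤ 1 := by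
  refine ContinuousLinearMap.opNorm_le_bound _ zero_le_one fun u => ?_
  set v : ℝ → H := fun r => exp (r • -B) u
  have hv : ∀ r, HasDerivAt v (-B (v r)) r := fun r => by
    have := ((ContinuousLinearMap.apply ℂ H u).restrictScalars ℝ).hasFDerivAt.comp_hasDerivAt r
      (hasDerivAt_exp_smul_const' (-B) r)
    simpa [v, Function.comp_def] using this
  let _ : InnerProductSpace ℝ H := InnerProductSpace.rclikeToReal ℂ H
  have hanti : Antitone fun r => ‖v r‖ ^ 2 := by
    refine antitone_of_deriv_nonpos (fun r => (hv r).norm_sq.differentiableAt) fun r => ?_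
    rw [(hv r).norm_sq.deriv, real_inner_eq_re_inner, inner_neg_right, map_neg,
      RCLike.re_to_complex]
    linarith [hB (v r)]
  have h01 := hanti zero_le_one
  simp only [v, one_smul, zero_smul, NormedSpace.exp_zero, one_apply_eq_self] at h01
  rw [one_mul]
  exact (pow_le_pow_iff_left₀ (norm_nonneg _) (norm_nonneg _) two_ne_zero).1 h01

theorem norm_mul_exp_neg_le_of_forall_mem_sphere (L : H →L[ℂ] H) {c : ℂ} {ρ : ℝ}
    (hL : ∀ z ∈ sphere c ρ, ∀ u, 0 ≤ (inner ℂ u ((z • L) u)).re) (h1 : (1 : ℂ) ∈ ball c ρ) :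
    ‖L * exp (-L)‖ ≤ ρ / (ρ ^ 2 - ‖1 - c‖ ^ 2) := by
  set g : ℂ → H →L[ℂ] H := fun z => exp (z • -L)
  have hg : ∀ z, HasDerivAt g (-L * g z) z := hasDerivAt_exp_smul_const' (-L)
  have hg_sphere : ∀ z ∈ sphere c ρ, ‖g z‖ ≤ 1 := fun z hz => by
    simpa [g, smul_neg] using norm_exp_neg_le_one_of_forall_re_inner_nonneg (z • L) (hL z hz)
  have := norm_deriv_le_mul_div_of_forall_mem_sphere_norm_le
    (Differentiable.diffContOnCl fun z => (hg z).differentiableAt) hg_sphere h1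
  rw [(hg 1).deriv, neg_mul, norm_neg, one_mul] at this
  simpa [g] using this

theorem norm_mul_exp_neg_le_of_sectorial (L : H →L[ℂ] H) {θ : ℝ}
    (hθ : θ ∈ Set.Ioc 0 (Real.pi / 2))
    (hL : ∀ u, 0 ≤ (inner ℂ u (L u)).re ∧
      Real.sin θ * |(inner ℂ u (L u)).im| ≤ Real.cos θ * (inner ℂ u (L u)).re) :
    ‖L * exp (-L)‖ ≤ 2 / (Real.pi * (1 - Real.cos θ)) := by
  obtain ⟨hθ0, hθ1⟩ := hθ
  set k := Real.cos θ
  set s := Real.sin θ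
  have hk0 : 0 ≤ k := Real.cos_nonneg_of_mem_Icc ⟨by linarith, hθ1⟩
  have hk1 : k < 1 := by
    simpa using Real.cos_lt_cos_of_nonneg_of_le_pi le_rfl (by linarith) hθ0
  have hs : 0 < s := Real.sin_pos_of_pos_of_lt_pi hθ0 (by linarith)
  have hsk : s ^ 2 + k ^ 2 = 1 := Real.sin_sq_add_cos_sq θ
  -- The disk of center `c` and radius `c sin θ` is inscribed in the sector `|arg z| ≤ θ`. Its
  -- optimal center `1 / cos θ` degenerates at `θ = π / 2`; this one reduces the bound to `3π ≤ 10`.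
  set c := 3 / (1 + 2 * k)
  have hc : c * (1 + 2 * k) = 3 := div_mul_cancel₀ _ (by linarith)
  have hnorm : ‖(1 : ℂ) - c‖ = c - 1 := by
    rw [← ofReal_one, ← ofReal_sub, norm_real, Real.norm_eq_abs, abs_sub_comm,
      abs_of_nonneg (by nlinarith)]
  have hL_sphere : ∀ z ∈ sphere (c : ℂ) (s * c), ∀ u, 0 ≤ (inner ℂ u ((z • L) u)).re :=
    fun z hz u => by
      rw [smul_apply, inner_smul_right]
      exact re_mul_nonneg_of_mem_dual_sectors hs (hL u).1 (hL u).2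
        (abs_im_mul_le_re_mul_of_mem_closedBall hsk (sphere_subset_closedBall hz))
  have h1 : (1 : ℂ) ∈ ball (c : ℂ) (s * c) := by
    have hks : 1 ≤ k + s := by nlinarith
    rw [mem_ball, dist_eq_norm, hnorm]
    nlinarith
  calc ‖L * exp (-L)‖ ≤ s * c / ((s * c) ^ 2 - ‖1 - (c : ℂ)‖ ^ 2) :=
        norm_mul_exp_neg_le_of_forall_mem_sphere L hL_sphere h1
    _ ≤ 2 / (Real.pi * (1 - k)) := by
        rw [hnorm]
        exact inscribed_disk_estimate hk0 hk1 hsk hc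

end Operator

/-- If the numerical range of a bounded operator `L` on a complex Hilbert
space lies in the sector `|arg z| ≤ π/2 - 2α` with `α ∈ (0, π/4]`, then
`‖t L e^{-tL}‖ ≤ 1/(π sin²α)` for all `t ≥ 0`. -/
theorem sectorial_semigroup_bound
    {H : Type*} [NormedAddCommGroup H] [InnerProductSpace ℂ H] [CompleteSpace H]
    (L : H →L[ℂ] H) (α : ℝ) (hα : α ∈ Set.Ioc 0 (Real.pi / 4))
    (hsec : ∀ u : H,
      0 ≤ (inner ℂ u (L u) : ℂ).re ∧
      |(inner ℂ u (L u) : ℂ).im| ≤ Real.tan (Real.pi / 2 - 2 * α) * (inner ℂ u (L u) : ℂ).re) :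
    ∀ t : ℝ, 0 ≤ t →
      ‖(t • L) * NormedSpace.exp (-(t • L))‖ ≤ 1 / (Real.pi * Real.sin α ^ 2) := by
  intro t ht
  obtain ⟨hα0, hα4⟩ := hα
  have hs : 0 < Real.sin (2 * α) := Real.sin_pos_of_pos_of_lt_pi (by linarith) (by linarith)
  have hsec_t : ∀ u, 0 ≤ (inner ℂ u ((t • L) u)).re ∧ Real.sin (2 * α) *
      |(inner ℂ u ((t • L) u)).im| ≤ Real.cos (2 * α) * (inner ℂ u ((t • L) u)).re := fun u => by
    obtain ⟨hre, him⟩ := hsec u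
    rw [Real.tan_eq_sin_div_cos, Real.sin_pi_div_two_sub, Real.cos_pi_div_two_sub,
      div_mul_eq_mul_div, le_div_iff₀' hs] at him
    rw [smul_apply, inner_smul_right_eq_smul, smul_re, smul_im, smul_eq_mul,
      smul_eq_mul, abs_mul, abs_of_nonneg ht]
    constructor <;> nlinarith
  calc ‖(t • L) * exp (-(t • L))‖ ≤ 2 / (Real.pi * (1 - Real.cos (2 * α))) :=
        norm_mul_exp_neg_le_of_sectorial (t • L) ⟨by linarith, by linarith⟩ hsec_t
    _ = 1 / (Real.pi * Real.sin α ^ 2) := by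
        rw [Real.sin_sq_eq_half_sub]
        field_simp
end

section
/- Let λ > 0 and a ∈ ℝ with a² > (1 − λ)²/(4λ), and set S = diag(1, λ), J = [[0, a], [−a, 0]] as 2×2 real matrices. Then for every t ≥ 0, the operator norm of the matrix exponential satisfies ‖exp(−t·(I + J)·S)‖ ≤ 2·(λ + 1)·|a| / √(4λa² − (1 − λ)²) · exp(−((1 + λ)/2)·t). -/
/-!
Write `(I + J) S = ((1 + λ) / 2) • I + B` with `B` traceless and
`det B = λ a² - (1 - λ)² / 4 = ω² > 0`. By Cayley–Hamilton `K = ω⁻¹ B` satisfies `K² = -I`,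
so `ℂ → ℝ[K]`, `i ↦ K`, is an algebra map and
`exp (-t (I + J) S) = e^{-(1 + λ) t / 2} (cos (ω t) I - sin (ω t) K)`.
The operator norm is at most the Frobenius norm, and for traceless `K` of determinant one the
Frobenius norm of `cos y I + sin y K` is at most that of `K`, namely
`√((λ + 1)² a² - 2 ω²) / ω ≤ (λ + 1) |a| / ω`.
-/

open Matrix
open scoped Matrix.Norms.L2Operator

theorem Matrix.l2_opNorm_le_sqrt_sum_sq {m n : Type*} [Fintype m] [Fintype n] [DecidableEq n]
    (M : Matrix m n ℝ) : ‖M‖ ≤ √(∑ i, ∑ j, M i j ^ 2) := by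
  rw [l2_opNorm_def]
  refine ContinuousLinearMap.opNorm_le_bound _ (Real.sqrt_nonneg _) fun x => ?_
  rw [← Real.sqrt_sq (norm_nonneg x), ← Real.sqrt_mul (by positivity),
    Real.le_sqrt (norm_nonneg _) (by positivity), EuclideanSpace.norm_sq_eq,
    EuclideanSpace.norm_sq_eq, Finset.sum_mul]
  gcongr with i
  simpa [Matrix.mulVec, dotProduct] using Finset.sum_mul_sq_le_sq_mul_sq _ (M i) (x ·)

theorem Matrix.sum_sq_smul {m n : Type*} [Fintype m] [Fintype n] (c : ℝ) (M : Matrix m n ℝ) :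
    ∑ i, ∑ j, (c • M) i j ^ 2 = c ^ 2 * ∑ i, ∑ j, M i j ^ 2 := by
  simp only [smul_apply, smul_eq_mul, mul_pow, Finset.mul_sum]

theorem Matrix.fin_two_mul_self_eq_neg_det_smul_one {R : Type*} [CommRing R]
    (B : Matrix (Fin 2) (Fin 2) R) (hB : B.trace = 0) : B * B = -B.det • 1 := by
  obtain ⟨p, q, r, s, rfl⟩ : ∃ p q r s, B = !![p, q; r, s] := ⟨_, _, _, _, eta_fin_two B⟩
  obtain rfl : s = -p := by rw [trace_fin_two_of] at hB; linear_combination hB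
  rw [mul_fin_two, det_fin_two_of, one_fin_two, smul_of]
  congr 1; ext i j; fin_cases i <;> fin_cases j <;> simp <;> ring

theorem Matrix.det_inv_sqrt_det_smul_fin_two {B : Matrix (Fin 2) (Fin 2) ℝ} (hB : 0 < B.det) :
    ((√B.det)⁻¹ • B).det = 1 := by
  rw [det_smul, Fintype.card_fin, inv_pow, Real.sq_sqrt hB.le, inv_mul_cancel₀ hB.ne']

theorem Matrix.l2_opNorm_cos_add_sin_smul_le {K : Matrix (Fin 2) (Fin 2) ℝ} (htr : K.trace = 0)
    (hdet : K.det = 1) (y : ℝ) :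
    ‖algebraMap ℝ _ (Real.cos y) + Real.sin y • K‖ ≤ √(∑ i, ∑ j, K i j ^ 2) := by
  refine (l2_opNorm_le_sqrt_sum_sq _).trans (Real.sqrt_le_sqrt ?_)
  obtain ⟨p, q, r, s, rfl⟩ : ∃ p q r s, K = !![p, q; r, s] := ⟨_, _, _, _, eta_fin_two K⟩
  obtain rfl : s = -p := by rw [trace_fin_two_of] at htr; linear_combination htr
  rw [det_fin_two_of] at hdet
  simp only [smul_of, smul_cons, smul_eq_mul, smul_empty, mul_neg, add_apply,
    algebraMap_matrix_apply, Algebra.algebraMap_self, Real.ringHom_apply, of_apply, cons_val',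
    cons_val_fin_one, Fin.sum_univ_two, Fin.isValue, cons_val_zero, cons_val_one, ↓reduceIte,
    zero_ne_one, zero_add, one_ne_zero, even_two, Even.neg_pow]
  -- the slack is `cos² y (4 p² + (q + r)²)`
  nlinarith [Real.sin_sq_add_cos_sq y, mul_nonneg (sq_nonneg (Real.cos y))
    (add_nonneg (sq_nonneg (2 * p)) (sq_nonneg (q + r)))]

/-- Transport `Complex.exp` along the real algebra map `ℂ → A` sending `i` to `K`. -/
theorem NormedSpace.exp_algebraMap_add_smul_of_mul_self_eq_neg_one {A : Type*} [NormedRing A]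
    [NormedAlgebra ℝ A] [CompleteSpace A] {K : A} (hK : K * K = -1) (x y : ℝ) :
    exp (algebraMap ℝ A x + y • K) =
      Real.exp x • (algebraMap ℝ A (Real.cos y) + Real.sin y • K) := by
  have hz := map_exp_of_mem_ball (𝕂 := ℝ) (Complex.liftAux K hK)
    (Complex.liftAux K hK).toLinearMap.continuous_of_finiteDimensional ⟨x, y⟩
    ((expSeries_radius_eq_top ℝ ℂ).symm ▸ edist_lt_top _ _)
  rw [← Complex.exp_eq_exp_ℂ, Complex.liftAux_apply, Complex.liftAux_apply] at hz
  rw [← hz, Complex.exp_re, Complex.exp_im, smul_add, smul_smul, map_mul, ← Algebra.smul_def]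

noncomputable def tracelessPart (lam a : ℝ) : Matrix (Fin 2) (Fin 2) ℝ :=
  !![(1 - lam) / 2, a * lam; -a, (lam - 1) / 2]

theorem trace_tracelessPart (lam a : ℝ) : (tracelessPart lam a).trace = 0 := by
  rw [tracelessPart, trace_fin_two_of]; ring

theorem det_tracelessPart (lam a : ℝ) :
    (tracelessPart lam a).det = lam * a ^ 2 - (1 - lam) ^ 2 / 4 := by
  rw [tracelessPart, det_fin_two_of]; ring

theorem sum_sq_tracelessPart (lam a : ℝ) :
    ∑ i, ∑ j, tracelessPart lam a i j ^ 2 =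
      (lam + 1) ^ 2 * a ^ 2 - 2 * (tracelessPart lam a).det := by
  rw [det_tracelessPart]
  simp only [tracelessPart, of_apply, cons_val', cons_val_fin_one, Fin.sum_univ_two, Fin.isValue,
    cons_val_zero, cons_val_one, even_two, Even.neg_pow]
  ring

theorem mul_diag_eq_algebraMap_add_tracelessPart (lam a : ℝ) :
    (1 + !![(0 : ℝ), a; -a, 0]) * !![(1 : ℝ), 0; 0, lam] =
      algebraMap ℝ _ ((1 + lam) / 2) + tracelessPart lam a := by
  rw [Algebra.algebraMap_eq_smul_one, one_fin_two]
  ext i j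
  fin_cases i <;> fin_cases j <;> simp [tracelessPart] <;> ring

theorem neg_smul_mul_diag_eq (lam a t : ℝ) {ω : ℝ} (hω : ω ≠ 0) :
    -(t • ((1 + !![(0 : ℝ), a; -a, 0]) * !![(1 : ℝ), 0; 0, lam])) =
      algebraMap ℝ _ (-((1 + lam) / 2) * t) + (-(t * ω)) • (ω⁻¹ • tracelessPart lam a) := by
  rw [mul_diag_eq_algebraMap_add_tracelessPart, smul_smul, neg_mul (t * _),
    mul_inv_cancel_right₀ hω, Algebra.algebraMap_eq_smul_one, Algebra.algebraMap_eq_smul_one]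
  module

theorem sqrt_sum_sq_inv_sqrt_det_smul_tracelessPart_le {lam a : ℝ} (hlam : 0 < lam)
    (hdet : 0 < (tracelessPart lam a).det) :
    √(∑ i, ∑ j, ((√(tracelessPart lam a).det)⁻¹ • tracelessPart lam a) i j ^ 2) ≤
      2 * (lam + 1) * |a| / √(4 * lam * a ^ 2 - (1 - lam) ^ 2) := by
  have h4 : 4 * lam * a ^ 2 - (1 - lam) ^ 2 = 2 ^ 2 * (tracelessPart lam a).det := by
    rw [det_tracelessPart]; ring
  rw [sum_sq_smul, sum_sq_tracelessPart, h4, Real.sqrt_le_left (by positivity), div_pow,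
    mul_pow, mul_pow, sq_abs, Real.sq_sqrt (by positivity), inv_pow, Real.sq_sqrt hdet.le,
    mul_assoc, mul_div_mul_left _ _ (by norm_num), inv_mul_eq_div]
  gcongr
  linarith

/-- For `S = diag(1, λ)`, `J = [[0,a],[-a,0]]` with
`a² > (1-λ)²/(4λ)`, the matrix exponential satisfies, for all `t ≥ 0`,
`‖exp(-t(I+J)S)‖ ≤ 2(λ+1)|a|/√(4λa² - (1-λ)²) · e^{-((1+λ)/2)t}`. -/
theorem two_dim_semigroup_bound
    (lam a : ℝ) (hlam : 0 < lam) (ha : (1 - lam) ^ 2 / (4 * lam) < a ^ 2) :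
    ∀ t : ℝ, 0 ≤ t →
      ‖NormedSpace.exp
          (-(t • ((1 + !![(0 : ℝ), a; -a, 0]) * !![(1 : ℝ), 0; 0, lam])))‖ ≤
        2 * (lam + 1) * |a| / Real.sqrt (4 * lam * a ^ 2 - (1 - lam) ^ 2) *
          Real.exp (-((1 + lam) / 2) * t) := by
  intro t _
  set B := tracelessPart lam a
  have hdet : 0 < B.det := by
    have := (div_lt_iff₀ (by positivity)).mp ha
    rw [det_tracelessPart]
    linarith
  set K := (√B.det)⁻¹ • B
  have hKtr : K.trace = 0 := by rw [trace_smul, trace_tracelessPart, smul_zero]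
  have hKdet : K.det = 1 := det_inv_sqrt_det_smul_fin_two hdet
  have hK : K * K = -1 := by
    simpa [hKdet] using fin_two_mul_self_eq_neg_det_smul_one K hKtr
  rw [neg_smul_mul_diag_eq lam a t (Real.sqrt_pos.mpr hdet).ne',
    NormedSpace.exp_algebraMap_add_smul_of_mul_self_eq_neg_one hK, norm_smul,
    Real.norm_eq_abs, Real.abs_exp, mul_comm]
  gcongr
  exact (l2_opNorm_cos_add_sin_smul_le hKtr hKdet _).trans
    (sqrt_sum_sq_inv_sqrt_det_smul_tracelessPart_le hlam hdet)
end
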